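/- arXiv:math/0406374 — 11 statements merged into one kernel-verified Lean document; each statement's English description precedes it below -/
import Mathlib

section
/- Let $X$ be a finite metric space with at least 2 points that embeds with distortion at most $\alpha$ into a $k$-lacunary metric space, where $k, \alpha > 1$. Then $|X| \le 2 + \log_k(\alpha \Phi(X))$, where $\Phi(X) = \mathrm{diam}(X) / \min_{x \ne y} d(x,y)$ is the aspect ratio of $X$. -/
/-- The distance function of a metric space on `Fin n` determined by a sequence `a`:
`d i j = a (min i j)` for `i ≠ j`. -/
def lacunaryDist (a : ℕ → ℝ) {n : ℕ} (i j : Fin n) : ℝ :=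
  if i = j then 0 else a (min i.val j.val)

/-- `a` restricted to `{0, …, n-1}` is a positive non-increasing `k`-lacunary sequence. -/
def IsLacunarySeq (k : ℝ) (n : ℕ) (a : ℕ → ℝ) : Prop :=
  (∀ i, i < n → 0 < a i) ∧ (∀ i j, i ≤ j → j < n → a j ≤ a i) ∧
    (∀ i, i + 1 < n → a (i + 1) ≤ a i / k)

/-- The aspect ratio `Φ(X) = diam(X) / min_{x ≠ y} d(x,y)`. -/
noncomputable def aspectRatio (X : Type*) [MetricSpace X] : ℝ :=
  Metric.diam (Set.univ : Set X) / sInf {r | ∃ x y : X, x ≠ y ∧ r = dist x y}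

/-!
Among `m` points of a `k`-lacunary space, the largest distance is attained at the smallest
index `i` and the smallest one at the second largest index `i'`; since the `m - 1` points
other than the largest lie in `[i, i']`, we get `i' ≥ i + (m - 2)` and hence
`a i ≥ k ^ (m - 2) · a i'`. An embedding of distortion `α` distorts ratios of distances
by at most `α`, so `k ^ (m - 2) ≤ α Φ(X)`.
-/

open Finset

section Lacunary

variable {k : ℝ} {n : ℕ} {a : ℕ → ℝ}

lemma lacunaryDist_of_lt {i j : Fin n} (h : i < j) : lacunaryDist a i j = a i := by
  rw [lacunaryDist, if_neg h.ne, min_eq_left (Fin.le_iff_val_le_val.mp h.le)]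

lemma IsLacunarySeq.mul_pow_le (ha : IsLacunarySeq k n a) (hk : 0 < k) :
    ∀ d {i j : ℕ}, i + d ≤ j → j < n → a j * k ^ d ≤ a i
  | 0, i, j, hij, hj => by simpa using ha.2.1 i j (by omega) hj
  | d + 1, i, j, hij, hj => by
    obtain ⟨j, rfl⟩ : ∃ j', j = j' + 1 := ⟨j - 1, by omega⟩
    calc a (j + 1) * k ^ (d + 1) ≤ a j / k * k ^ (d + 1) := by gcongr; exact ha.2.2 j hj
      _ = a j * k ^ d := by field_simp; ring
      _ ≤ a i := ha.mul_pow_le hk d (by omega) (by omega)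

lemma IsLacunarySeq.exists_lacunaryDist_mul_pow_le (ha : IsLacunarySeq k n a) (hk : 0 < k)
    {s : Finset (Fin n)} (hs : 2 ≤ #s) :
    ∃ i ∈ s, ∃ i' ∈ s, ∃ j ∈ s, i < j ∧ i' < j ∧
      lacunaryDist a i' j * k ^ (#s - 2) ≤ lacunaryDist a i j := by
  have hne : s.Nonempty := card_pos.mp (by omega)
  set j := s.max' hne
  have hj : j ∈ s := s.max'_mem hne
  have hne' : (s.erase j).Nonempty := card_pos.mp (by rw [card_erase_of_mem hj]; omega)
  set i := s.min' hne
  set i' := (s.erase j).max' hne'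
  have hi' : i' ∈ s.erase j := (s.erase j).max'_mem hne'
  have hij : i < j := s.min'_lt_max'_of_card (by omega)
  have hi'j : i' < j := lt_of_le_of_ne (s.le_max' i' (mem_of_mem_erase hi')) (ne_of_mem_erase hi')
  have hspread : (i : ℕ) + (#s - 2) ≤ i' := by
    have hsub : s.erase j ⊆ Icc i i' := fun x hx =>
      mem_Icc.mpr ⟨s.min'_le x (mem_of_mem_erase hx), (s.erase j).le_max' x hx⟩
    have := card_le_card hsub
    rw [card_erase_of_mem hj, Fin.card_Icc] at this
    omega
  refine ⟨i, s.min'_mem hne, i', mem_of_mem_erase hi', j, hj, hij, hi'j, ?_⟩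
  rw [lacunaryDist_of_lt hij, lacunaryDist_of_lt hi'j]
  exact ha.mul_pow_le hk _ hspread i'.isLt

lemma IsLacunarySeq.exists_lacunaryDist_mul_pow_le_of_injective {X : Type*} [Fintype X]
    (ha : IsLacunarySeq k n a) (hk : 0 < k) {f : X → Fin n} (hf : Function.Injective f)
    (hX : 2 ≤ Fintype.card X) :
    ∃ x y u v : X, x ≠ y ∧ u ≠ v ∧
      lacunaryDist a (f u) (f v) * k ^ (Fintype.card X - 2) ≤ lacunaryDist a (f x) (f y) := by
  have hcard : #(univ.image f) = Fintype.card X := card_image_of_injective _ hf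
  obtain ⟨_, hi, _, hi', _, hj, hij, hi'j, hle⟩ :=
    ha.exists_lacunaryDist_mul_pow_le hk (s := univ.image f) (hcard ▸ hX)
  obtain ⟨x, -, rfl⟩ := mem_image.mp hi
  obtain ⟨u, -, rfl⟩ := mem_image.mp hi'
  obtain ⟨y, -, rfl⟩ := mem_image.mp hj
  exact ⟨x, y, u, y, fun h => hij.ne (congrArg f h), fun h => hi'j.ne (congrArg f h),
    hcard ▸ hle⟩

end Lacunary

section AspectRatio

variable {X : Type*} [MetricSpace X] [Finite X]

lemma dist_div_dist_le_aspectRatio (x y : X) {u v : X} (huv : u ≠ v) :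
    dist x y / dist u v ≤ aspectRatio X := by
  set S := {r | ∃ x y : X, x ≠ y ∧ r = dist x y}
  have hS : S.Finite := (Set.finite_range fun p : X × X => dist p.1 p.2).subset <| by
    rintro _ ⟨x, y, -, rfl⟩
    exact ⟨(x, y), rfl⟩
  have hmin_pos : 0 < sInf S := by
    obtain ⟨x, y, hxy, hr⟩ := (show S.Nonempty from ⟨_, u, v, huv, rfl⟩).csInf_mem hS
    exact hr ▸ dist_pos.mpr hxy
  exact div_le_div₀ Metric.diam_nonneg
    (Metric.dist_le_diam_of_mem Set.finite_univ.isBounded trivial trivial) hmin_pos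
    (csInf_le hS.bddBelow ⟨u, v, huv, rfl⟩)

end AspectRatio

lemma Real.natCast_le_logb_of_pow_le {b y : ℝ} (hb : 1 < b) {m : ℕ} (h : b ^ m ≤ y) :
    (m : ℝ) ≤ Real.logb b y := by
  rw [Real.le_logb_iff_rpow_le hb ((pow_pos (by linarith) m).trans_le h), Real.rpow_natCast]
  exact h

/-- if a finite metric space `X` with `|X| ≥ 2` embeds with distortion
at most `α` into a `k`-lacunary metric space (`k, α > 1`), then
`|X| ≤ 2 + log_k (α ⬝ Φ(X))`. -/
theorem stmt_1 (X : Type*) [MetricSpace X] [Fintype X] (hX : 2 ≤ Fintype.card X)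
    (k α : ℝ) (hk : 1 < k) (hα : 1 < α)
    (h : ∃ (n : ℕ) (a : ℕ → ℝ) (f : X → Fin n), Function.Injective f ∧
      IsLacunarySeq k n a ∧ ∃ r : ℝ, 0 < r ∧ ∀ x y : X,
        r * dist x y ≤ lacunaryDist a (f x) (f y) ∧
        lacunaryDist a (f x) (f y) ≤ α * (r * dist x y)) :
    (Fintype.card X : ℝ) ≤ 2 + Real.logb k (α * aspectRatio X) := by
  obtain ⟨n, a, f, hf, ha, r, hr, hemb⟩ := h
  obtain ⟨x, y, u, v, -, huv, hlac⟩ :=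
    ha.exists_lacunaryDist_mul_pow_le_of_injective (by linarith) hf hX
  set c := k ^ (Fintype.card X - 2)
  have hratio : c ≤ α * (dist x y / dist u v) := by
    rw [mul_div_assoc', le_div_iff₀ (dist_pos.mpr huv), ← mul_le_mul_iff_right₀ hr]
    calc r * (c * dist u v) = c * (r * dist u v) := by ring
      _ ≤ lacunaryDist a (f u) (f v) * c := by rw [mul_comm]; gcongr; exact (hemb u v).1
      _ ≤ α * (r * dist x y) := hlac.trans (hemb x y).2
      _ = r * (α * dist x y) := by ring
  have hc : c ≤ α * aspectRatio X :=
    hratio.trans (by gcongr; exact dist_div_dist_le_aspectRatio x y huv)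
  have hlog := Real.natCast_le_logb_of_pow_le hk hc
  rw [Nat.cast_sub hX] at hlog
  push_cast at hlog
  linarith
end

section
/- Let $(a_i)_{i=1}^m$ be positive reals satisfying $a_j \le 2a_i$ whenever $i < j$. Fix $\epsilon > 0$ and $k \ge 1$. Then there exists a subset $L \subseteq \{1, \dots, m\}$ with $|L| \ge m / (\lceil \log_{1+\epsilon}(2k) \rceil + 1)$ and reals $(b_i)_{i \in L}$ such that $a_i \le b_i \le (1+\epsilon) a_i$ for all $i \in L$, and for all $i < j$ in $L$, either $b_i = b_j$ or $b_j \le b_i / k$. -/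
/-- given positive reals `a 1, …, a m` with `a j ≤ 2 a i` for `i < j`,
`ε > 0` and `k ≥ 1`, there exist `L ⊆ {1, …, m}` with
`|L| ≥ m / (⌈log_{1+ε}(2k)⌉ + 1)` and reals `b i` (for `i ∈ L`) with
`a i ≤ b i ≤ (1+ε) a i`, such that for `i < j` in `L` either `b i = b j` or
`b j ≤ b i / k`. -/
theorem stmt_3 (m : ℕ) (a : ℕ → ℝ) (ε k : ℝ) (hε : 0 < ε) (hk : 1 ≤ k)
    (hpos : ∀ i, 1 ≤ i → i ≤ m → 0 < a i)
    (hgrow : ∀ i j, 1 ≤ i → i < j → j ≤ m → a j ≤ 2 * a i) :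
    ∃ (L : Finset ℕ) (b : ℕ → ℝ), L ⊆ Finset.Icc 1 m ∧
      (m : ℝ) / ((⌈Real.logb (1 + ε) (2 * k)⌉ : ℝ) + 1) ≤ (L.card : ℝ) ∧
      (∀ i ∈ L, a i ≤ b i ∧ b i ≤ (1 + ε) * a i) ∧
      (∀ i ∈ L, ∀ j ∈ L, i < j → b i = b j ∨ b j ≤ b i / k) := by
  set c : ℝ := 1 + ε with hcdef
  have hc1 : 1 < c := by rw [hcdef]; linarith
  have hc0 : 0 < c := by linarith
  have hcne : c ≠ 1 := ne_of_gt hc1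
  have hk0 : (0:ℝ) < k := lt_of_lt_of_le one_pos hk
  set T : ℤ := ⌈Real.logb c (2 * k)⌉ + 1 with hTdef
  have hlog2k : (0:ℝ) < Real.logb c (2*k) := Real.logb_pos hc1 (by linarith)
  have hceil1 : (1:ℤ) ≤ ⌈Real.logb c (2*k)⌉ := by
    have := Int.ceil_pos.mpr hlog2k; omega
  have hT2 : (2:ℤ) ≤ T := by omega
  have hT0 : (0:ℝ) < (T:ℝ) := by exact_mod_cast (by omega : (0:ℤ) < T)
  set ℓ : ℕ → ℤ := fun i => ⌈Real.logb c (a i)⌉ with hldef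
  set b : ℕ → ℝ := fun i => c ^ ((ℓ i : ℝ)) with hbdef
  set f : ℕ → ℤ := fun i => ℓ i % T with hfdef
  have hmaps : ∀ x ∈ Finset.Icc 1 m, f x ∈ Finset.Ico (0:ℤ) T := by
    intro x _
    simp only [Finset.mem_Ico, hfdef]
    exact ⟨Int.emod_nonneg _ (by omega), Int.emod_lt_of_pos _ (by omega)⟩
  have hcardsum : (Finset.Icc 1 m).card
      = ∑ y ∈ Finset.Ico (0:ℤ) T, ((Finset.Icc 1 m).filter fun x => f x = y).card :=
    Finset.card_eq_sum_card_fiberwise hmaps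
  have hIcc : (Finset.Icc 1 m).card = m := by simp
  have hsumN : (∑ y ∈ Finset.Ico (0:ℤ) T, ((Finset.Icc 1 m).filter fun x => f x = y).card) = m :=
    hcardsum.symm.trans hIcc
  obtain ⟨y, -, hy⟩ : ∃ y ∈ Finset.Ico (0:ℤ) T,
      (m:ℝ)/(T:ℝ) ≤ (((Finset.Icc 1 m).filter fun x => f x = y).card : ℝ) := by
    by_contra h
    push_neg at h
    have hne : (Finset.Ico (0:ℤ) T).Nonempty := ⟨0, by simp; omega⟩
    have hlt : ∑ y ∈ Finset.Ico (0:ℤ) T,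
          ((((Finset.Icc 1 m).filter fun x => f x = y).card : ℝ))
        < ∑ _y ∈ Finset.Ico (0:ℤ) T, (m:ℝ)/(T:ℝ) :=
      Finset.sum_lt_sum_of_nonempty hne (fun z hz => h z hz)
    have hcardIco : ((Finset.Ico (0:ℤ) T).card : ℝ) = (T:ℝ) := by
      rw [Int.card_Ico]
      have h1 : (T - 0).toNat = T.toNat := by omega
      rw [h1]
      exact_mod_cast Int.toNat_of_nonneg (by omega)
    rw [Finset.sum_const, nsmul_eq_mul, hcardIco] at hlt
    have hsum : ((m:ℕ):ℝ)
        = ∑ y ∈ Finset.Ico (0:ℤ) T, ((((Finset.Icc 1 m).filter fun x => f x = y).card : ℝ)) := by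
      exact_mod_cast hsumN.symm
    rw [← hsum, mul_div_cancel₀ _ (ne_of_gt hT0)] at hlt
    exact lt_irrefl _ hlt
  refine ⟨(Finset.Icc 1 m).filter (fun x => f x = y), b, Finset.filter_subset _ _, ?_, ?_, ?_⟩
  · have hTc : ((⌈Real.logb (1 + ε) (2 * k)⌉ : ℝ) + 1) = (T:ℝ) := by
      rw [hTdef]; push_cast; rw [hcdef]
    rw [hTc]; exact hy
  · intro i hi
    simp only [Finset.mem_filter, Finset.mem_Icc] at hi
    have hai : 0 < a i := hpos i hi.1.1 hi.1.2
    constructor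
    · calc a i = c ^ (Real.logb c (a i)) := (Real.rpow_logb hc0 hcne hai).symm
        _ ≤ c ^ ((ℓ i : ℝ)) := by
            apply Real.rpow_le_rpow_of_exponent_le (le_of_lt hc1)
            exact Int.le_ceil _
        _ = b i := by rw [hbdef]
    · calc b i = c ^ ((ℓ i : ℝ)) := by rw [hbdef]
        _ ≤ c ^ (Real.logb c (a i) + 1) := by
          apply Real.rpow_le_rpow_of_exponent_le (le_of_lt hc1)
          exact le_of_lt (Int.ceil_lt_add_one _)
        _ = c * a i := by
          rw [Real.rpow_add hc0, Real.rpow_one, Real.rpow_logb hc0 hcne hai]; ring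
  · intro i hi j hj hij
    simp only [Finset.mem_filter, Finset.mem_Icc] at hi hj
    have hai : 0 < a i := hpos i hi.1.1 hi.1.2
    have haj : 0 < a j := hpos j hj.1.1 hj.1.2
    have hdvd : T ∣ ℓ j - ℓ i := by
      have hmod : ℓ i % T = ℓ j % T := by
        have h1 : f i = y := hi.2
        have h2 : f j = y := hj.2
        rw [hfdef] at h1 h2
        simpa using h1.trans h2.symm
      exact Int.ModEq.dvd hmod
    have hlub : ℓ j ≤ ℓ i + T - 1 := by
      have h2a : a j ≤ 2 * a i := hgrow i j hi.1.1 hij hj.1.2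
      have hlog : Real.logb c (a j) ≤ Real.logb c 2 + Real.logb c (a i) := by
        rw [← Real.logb_mul two_ne_zero (ne_of_gt hai)]
        exact Real.logb_le_logb_of_le hc1 haj h2a
      have h1 : ℓ j ≤ ⌈Real.logb c 2 + Real.logb c (a i)⌉ := Int.ceil_le_ceil hlog
      have h2 : ⌈Real.logb c 2 + Real.logb c (a i)⌉ ≤ ⌈Real.logb c 2⌉ + ℓ i :=
        Int.ceil_add_le _ _
      have h3 : ⌈Real.logb c 2⌉ ≤ T - 1 := by
        have hm : Real.logb c 2 ≤ Real.logb c (2*k) :=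
          Real.logb_le_logb_of_le hc1 (by norm_num) (by linarith)
        have := Int.ceil_le_ceil hm
        omega
      omega
    obtain ⟨q, hq⟩ := hdvd
    have hqle : q ≤ 0 := by
      by_contra hqpos
      push_neg at hqpos
      have h1 : (1:ℤ) ≤ q := hqpos
      nlinarith
    rcases eq_or_lt_of_le hqle with hq0 | hq0
    · left
      rw [hq0, mul_zero] at hq
      have hle : ℓ i = ℓ j := by omega
      rw [hbdef]; simp only [hle]
    · right
      have hljle : ℓ j ≤ ℓ i - T := by nlinarith
      have h1 : b j ≤ c ^ ((ℓ i : ℝ) - (T:ℝ)) := by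
        rw [hbdef]
        apply Real.rpow_le_rpow_of_exponent_le (le_of_lt hc1)
        have : ((ℓ j : ℝ)) ≤ ((ℓ i - T : ℤ) : ℝ) := by exact_mod_cast hljle
        push_cast at this
        linarith
      have h2 : c ^ ((ℓ i : ℝ) - (T:ℝ)) = b i / c ^ ((T:ℝ)) := by
        rw [hbdef, Real.rpow_sub hc0]
      have h3 : k ≤ c ^ ((T:ℝ)) := by
        have hTge : Real.logb c (2*k) ≤ (T:ℝ) := by
          have hle := Int.le_ceil (Real.logb c (2*k))
          rw [hTdef]; push_cast; linarith
        calc k ≤ 2 * k := by linarith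
          _ = c ^ (Real.logb c (2*k)) := (Real.rpow_logb hc0 hcne (by linarith)).symm
          _ ≤ c ^ ((T:ℝ)) := Real.rpow_le_rpow_of_exponent_le (le_of_lt hc1) hTge
      have hbipos : (0:ℝ) ≤ b i := le_of_lt (Real.rpow_pos_of_pos hc0 _)
      calc b j ≤ b i / c ^ ((T:ℝ)) := by rw [← h2]; exact h1
        _ ≤ b i / k := by gcongr
end

section
/- Let $T$ be a rooted tree with $n$ leaves in which every vertex has at most $h \ge 2$ children. Then $T$ contains a subtree (obtained by choosing at most two children at each vertex) in which every vertex has at most 2 children and which has at least $n^{1/\log_2 h}$ leaves. -/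
/-!
Induct on the tree. If the subtrees of the root have `n₁ ≥ n₂ ≥ …` leaves, then
`n ≤ n₁ + (h - 1) n₂`, since the root has at most `h` children. Keeping binary subtrees of the
two largest subtrees gives at least `n₁ ^ c + n₂ ^ c` leaves, `c = 1 / log₂ h`, and
`n ^ c ≤ n₁ ^ c + n₂ ^ c` follows from the concavity of `x ↦ x ^ c` and `h ^ c = 2`.
-/

theorem rpow_le_rpow_add_rpow_of_le_add_mul {h c a b N : ℝ} (hh : 0 < h) (hc0 : 0 < c)
    (hc1 : c ≤ 1) (hpow : h ^ c = 2) (hb : 0 ≤ b) (hba : b ≤ a) (hN : 0 ≤ N)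
    (hNab : N ≤ a + (h - 1) * b) :
    N ^ c ≤ a ^ c + b ^ c := by
  have hbc : b ^ c ≤ a ^ c := Real.rpow_le_rpow hb hba hc0.le
  rcases le_or_gt N (h * b) with hNb | hNb
  · calc N ^ c ≤ (h * b) ^ c := Real.rpow_le_rpow hN hNb hc0.le
      _ = 2 * b ^ c := by rw [Real.mul_rpow hh.le hb, hpow]
      _ ≤ a ^ c + b ^ c := by linarith
  -- `b` and `N - (h - 1) b` are the convex combinations of `0`, resp. `N`, with `N / h` of
  -- the same weight `q`, and `N ^ c = 2 (N / h) ^ c`.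
  have hNpos : 0 < N := (mul_nonneg hh.le hb).trans_lt hNb
  set q := h * b / N with hq
  have hq0 : 0 ≤ q := by positivity
  have hq1 : q ≤ 1 := by rw [hq, div_le_one hNpos]; exact hNb.le
  have hqN : q * (N / h) = b := by rw [hq]; field_simp
  have hNh : N ^ c = 2 * (N / h) ^ c := by
    rw [← hpow, ← Real.mul_rpow hh.le (by positivity), mul_div_cancel₀ _ hh.ne']
  have K := Real.concaveOn_rpow hc0.le hc1
  have hleft := K.2 (Set.mem_Ici.2 hN) (Set.mem_Ici.2 (by positivity : 0 ≤ N / h))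
    (sub_nonneg.2 hq1) hq0 (sub_add_cancel 1 q)
  have hright := K.2 (Set.mem_Ici.2 le_rfl) (Set.mem_Ici.2 (by positivity : 0 ≤ N / h))
    (sub_nonneg.2 hq1) hq0 (sub_add_cancel 1 q)
  simp only [smul_eq_mul, mul_zero, zero_add, hqN, Real.zero_rpow hc0.ne'] at hleft hright
  have hcomb : (1 - q) * N + b = N - (h - 1) * b := by
    rw [← hqN, hq]; field_simp; ring
  rw [hcomb] at hleft
  calc N ^ c = (1 - q) * N ^ c + q * (N / h) ^ c + q * (N / h) ^ c := by rw [hNh]; ring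
    _ ≤ (N - (h - 1) * b) ^ c + b ^ c := add_le_add hleft hright
    _ ≤ a ^ c + b ^ c := by
      gcongr
      · nlinarith
      · linarith

theorem Finset.exists_card_le_two_rpow_sum_le {ι : Type*} [DecidableEq ι] (I : Finset ι)
    (f : ι → ℝ) (hf : ∀ i ∈ I, 0 ≤ f i) {h c : ℝ} (hh : 0 < h) (hc0 : 0 < c) (hc1 : c ≤ 1)
    (hpow : h ^ c = 2) (hI : (I.card : ℝ) ≤ h) :
    ∃ S ⊆ I, S.card ≤ 2 ∧ (∑ i ∈ I, f i) ^ c ≤ ∑ i ∈ S, f i ^ c := by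
  rcases I.eq_empty_or_nonempty with rfl | hne
  · exact ⟨∅, subset_rfl, by simp, by simp [Real.zero_rpow hc0.ne']⟩
  obtain ⟨i₁, hi₁, hmax₁⟩ := I.exists_max_image f hne
  rcases (I.erase i₁).eq_empty_or_nonempty with hrest | hrest
  · have hI₁ : I = {i₁} := by
      rw [← insert_erase hi₁, hrest]; rfl
    subst hI₁
    exact ⟨{i₁}, subset_rfl, by simp, by simp⟩
  obtain ⟨i₂, hi₂, hmax₂⟩ := (I.erase i₁).exists_max_image f hrest
  have hne₂ : i₂ ≠ i₁ := ne_of_mem_erase hi₂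
  refine ⟨{i₁, i₂}, insert_subset hi₁ (singleton_subset_iff.2 (mem_of_mem_erase hi₂)),
    card_le_two, ?_⟩
  rw [sum_pair hne₂.symm]
  refine rpow_le_rpow_add_rpow_of_le_add_mul hh hc0 hc1 hpow (hf _ (mem_of_mem_erase hi₂))
    (hmax₁ _ (mem_of_mem_erase hi₂)) (sum_nonneg hf) ?_
  calc ∑ i ∈ I, f i = f i₁ + ∑ i ∈ I.erase i₁, f i := (add_sum_erase _ _ hi₁).symm
    _ ≤ f i₁ + (I.erase i₁).card * f i₂ := by
      gcongr
      simpa using sum_le_card_nsmul _ _ _ hmax₂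
    _ ≤ f i₁ + (h - 1) * f i₂ := by
      gcongr
      · exact hf _ (mem_of_mem_erase hi₂)
      · rw [card_erase_of_mem hi₁, Nat.cast_sub (card_pos.2 hne)]
        push_cast; linarith

namespace PathTree

variable {α : Type*}

open Classical in
noncomputable def leaves (T : Finset (List α)) : Finset (List α) :=
  T.filter fun v => ∀ i, v ++ [i] ∉ T

noncomputable def subtree (T : Finset (List α)) (i : α) : Finset (List α) :=
  T.preimage (List.cons i) List.cons_injective.injOn

noncomputable def rootChildren (T : Finset (List α)) : Finset α :=
  T.preimage (fun i => [i]) fun _ _ _ _ h => List.singleton_injective h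

variable {T : Finset (List α)}

theorem mem_leaves {v : List α} : v ∈ leaves T ↔ v ∈ T ∧ ∀ i, v ++ [i] ∉ T := by
  classical
  simp [leaves]

@[simp]
theorem mem_subtree {i : α} {w : List α} : w ∈ subtree T i ↔ i :: w ∈ T :=
  Finset.mem_preimage

@[simp]
theorem mem_rootChildren {i : α} : i ∈ rootChildren T ↔ [i] ∈ T :=
  Finset.mem_preimage

theorem cons_mem_leaves {i : α} {w : List α} :
    i :: w ∈ leaves T ↔ w ∈ leaves (subtree T i) := by
  simp [mem_leaves]

theorem card_subtree_lt (hT : [] ∈ T) (i : α) : (subtree T i).card < T.card := by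
  classical
  calc (subtree T i).card ≤ (T.erase []).card :=
        Finset.card_le_card_of_injOn (List.cons i)
          (fun w hw => Finset.mem_erase.2 ⟨List.cons_ne_nil _ _, mem_subtree.1 hw⟩)
          List.cons_injective.injOn
    _ < T.card := Finset.card_erase_lt_of_mem hT

theorem subtree_prefix_closed (hpref : ∀ v ∈ T, ∀ u, u <+: v → u ∈ T) (i : α) :
    ∀ v ∈ subtree T i, ∀ u, u <+: v → u ∈ subtree T i := fun _ hv _ hu =>
  mem_subtree.2 (hpref _ (mem_subtree.1 hv) _ (List.cons_prefix_cons.2 ⟨rfl, hu⟩))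

theorem subtree_degree_le {h : ℕ} (hdeg : ∀ v ∈ T, {i | v ++ [i] ∈ T}.ncard ≤ h) (i : α) :
    ∀ v ∈ subtree T i, {j | v ++ [j] ∈ subtree T i}.ncard ≤ h := fun v hv => by
  simpa using hdeg _ (mem_subtree.1 hv)

theorem card_rootChildren_le {h : ℕ} (hT : [] ∈ T)
    (hdeg : ∀ v ∈ T, {i | v ++ [i] ∈ T}.ncard ≤ h) : (rootChildren T).card ≤ h := by
  have hroot : {i | [] ++ [i] ∈ T} = (rootChildren T : Set α) := by ext; simp
  rw [← Set.ncard_coe_finset, ← hroot]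
  exact hdeg [] hT

theorem leaves_subset_nil (hpref : ∀ v ∈ T, ∀ u, u <+: v → u ∈ T)
    (hT : rootChildren T = ∅) : leaves T ⊆ {[]} := by
  intro v hv
  cases v with
  | nil => exact Finset.mem_singleton_self _
  | cons i w =>
    have : i ∈ rootChildren T := mem_rootChildren.2 <|
      hpref _ (mem_leaves.1 hv).1 [i] (List.cons_prefix_cons.2 ⟨rfl, w.nil_prefix⟩)
    simp [hT] at this

def branching (L : Set (List α)) (v : List α) : Set α :=
  {i | ∃ l ∈ L, v ++ [i] <+: l}

theorem branching_biUnion_nil_subset (S : Set α) (L : α → Set (List α)) :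
    branching (⋃ i ∈ S, List.cons i '' L i) [] ⊆ S := by
  rintro k ⟨_, hl, hk⟩
  simp only [Set.mem_iUnion, Set.mem_image] at hl
  obtain ⟨i, hi, w, -, rfl⟩ := hl
  rw [List.nil_append, List.cons_prefix_cons] at hk
  exact hk.1 ▸ hi

theorem branching_biUnion_cons (S : Set α) (L : α → Set (List α)) (j : α) (w : List α) :
    branching (⋃ i ∈ S, List.cons i '' L i) (j :: w) =
      {k | j ∈ S ∧ k ∈ branching (L j) w} := by
  ext k
  simp only [branching, Set.mem_iUnion, Set.mem_image, List.cons_append]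
  constructor
  · rintro ⟨_, ⟨i, hi, u, hu, rfl⟩, hk⟩
    obtain ⟨rfl, hwu⟩ := List.cons_prefix_cons.1 hk
    exact ⟨hi, u, hu, hwu⟩
  · rintro ⟨hj, u, hu, hk⟩
    exact ⟨j :: u, ⟨j, hj, u, hu, rfl⟩, List.cons_prefix_cons.2 ⟨rfl, hk⟩⟩

theorem ncard_branching_biUnion_le (S : Finset α) (L : α → Set (List α)) (hS : S.card ≤ 2)
    (hL : ∀ i ∈ S, ∀ v, (branching (L i) v).ncard ≤ 2) (v : List α) :
    (branching (⋃ i ∈ (S : Set α), List.cons i '' L i) v).ncard ≤ 2 := by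
  cases v with
  | nil =>
    calc _ ≤ (S : Set α).ncard := Set.ncard_le_ncard (branching_biUnion_nil_subset _ L)
            S.finite_toSet
      _ ≤ 2 := by rwa [Set.ncard_coe_finset]
  | cons j w =>
    rw [branching_biUnion_cons]
    by_cases hj : j ∈ S
    · simpa [hj] using hL j hj w
    · simp [hj]

theorem card_biUnion_image_cons [DecidableEq α] (S : Finset α) (L : α → Finset (List α)) :
    (S.biUnion fun i => (L i).image (List.cons i)).card = ∑ i ∈ S, (L i).card := by
  rw [Finset.card_biUnion]
  · exact Finset.sum_congr rfl fun i _ => Finset.card_image_of_injective _ List.cons_injective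
  · intro i _ j _ hij
    simp only [Function.onFun, Finset.disjoint_left, Finset.mem_image]
    rintro _ ⟨u, -, rfl⟩ ⟨w, -, h⟩
    exact hij (List.cons_eq_cons.1 h).1.symm

theorem leaves_eq_biUnion [DecidableEq α] (hpref : ∀ v ∈ T, ∀ u, u <+: v → u ∈ T)
    (hne : (rootChildren T).Nonempty) :
    leaves T = (rootChildren T).biUnion fun i => (leaves (subtree T i)).image (List.cons i) := by
  ext v
  simp only [Finset.mem_biUnion, Finset.mem_image]
  cases v with
  | nil =>
    obtain ⟨i, hi⟩ := hne
    simpa [mem_leaves] using fun _ => ⟨i, mem_rootChildren.1 hi⟩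
  | cons j w =>
    rw [cons_mem_leaves]
    constructor
    · intro hw
      refine ⟨j, mem_rootChildren.2 ?_, w, hw, rfl⟩
      exact hpref _ (mem_leaves.1 (cons_mem_leaves.2 hw)).1 _
        (List.cons_prefix_cons.2 ⟨rfl, w.nil_prefix⟩)
    · rintro ⟨i, -, u, hu, h⟩
      obtain ⟨rfl, rfl⟩ := List.cons_eq_cons.1 h
      exact hu

theorem card_leaves_eq_sum [DecidableEq α] (hpref : ∀ v ∈ T, ∀ u, u <+: v → u ∈ T)
    (hne : (rootChildren T).Nonempty) :
    (leaves T).card = ∑ i ∈ rootChildren T, (leaves (subtree T i)).card := by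
  rw [leaves_eq_biUnion hpref hne, card_biUnion_image_cons]

theorem exists_binary_subset_leaves [DecidableEq α] {h : ℕ} {c : ℝ} (hc0 : 0 < c) (hc1 : c ≤ 1)
    (hpow : (h : ℝ) ^ c = 2) (T : Finset (List α)) (hpref : ∀ v ∈ T, ∀ u, u <+: v → u ∈ T)
    (hdeg : ∀ v ∈ T, {i | v ++ [i] ∈ T}.ncard ≤ h) :
    ∃ L ⊆ leaves T, ((leaves T).card : ℝ) ^ c ≤ L.card ∧
      ∀ v, (branching (L : Set (List α)) v).ncard ≤ 2 := by
  rcases (rootChildren T).eq_empty_or_nonempty with hleaf | hne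
  · have hsub := leaves_subset_nil hpref hleaf
    refine ⟨leaves T, subset_rfl, ?_, fun v => ?_⟩
    · have hcard : (leaves T).card ≤ 1 :=
        (Finset.card_le_card hsub).trans_eq (Finset.card_singleton _)
      interval_cases (leaves T).card <;> simp [Real.zero_rpow hc0.ne']
    · have hempty : branching (leaves T : Set (List α)) v = ∅ := by
        refine Set.eq_empty_of_forall_notMem fun i ⟨l, hl, hvl⟩ => ?_
        rw [Finset.mem_singleton.1 (hsub hl), List.prefix_nil] at hvl
        simp at hvl
      simp [hempty]
  have hT : [] ∈ T := by
    obtain ⟨i, hi⟩ := hne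
    exact hpref _ (mem_rootChildren.1 hi) [] List.nil_prefix
  have IH : ∀ i ∈ rootChildren T, ∃ L ⊆ leaves (subtree T i),
      ((leaves (subtree T i)).card : ℝ) ^ c ≤ L.card ∧
        ∀ v, (branching (L : Set (List α)) v).ncard ≤ 2 := fun i _ =>
    exists_binary_subset_leaves hc0 hc1 hpow (subtree T i) (subtree_prefix_closed hpref i)
      (subtree_degree_le hdeg i)
  choose! L hLsub hLcard hLbin using IH
  have hh : (0 : ℝ) < h := by
    rcases Nat.eq_zero_or_pos h with rfl | hpos
    · simp [Real.zero_rpow hc0.ne'] at hpow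
    · exact_mod_cast hpos
  obtain ⟨S, hS, hS2, hSsum⟩ := (rootChildren T).exists_card_le_two_rpow_sum_le
    (fun i => ((leaves (subtree T i)).card : ℝ)) (fun _ _ => Nat.cast_nonneg _) hh hc0 hc1 hpow
    (by exact_mod_cast card_rootChildren_le hT hdeg)
  refine ⟨S.biUnion fun i => (L i).image (List.cons i), ?_, ?_, ?_⟩
  · intro v hv
    simp only [Finset.mem_biUnion, Finset.mem_image] at hv
    obtain ⟨i, hi, w, hw, rfl⟩ := hv
    exact cons_mem_leaves.2 (hLsub i (hS hi) hw)
  · rw [card_biUnion_image_cons, card_leaves_eq_sum hpref hne]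
    push_cast
    exact hSsum.trans (Finset.sum_le_sum fun i hi => hLcard i (hS hi))
  · intro v
    rw [Finset.coe_biUnion]
    simp only [Finset.coe_image]
    exact ncard_branching_biUnion_le S (fun i => (L i : Set (List α))) hS2
      (fun i hi => hLbin i (hS hi)) v
termination_by T.card
decreasing_by exact card_subtree_lt hT i

end PathTree

/-- A rooted tree is encoded as a prefix-closed finite set of paths, the children of `v` being
the vertices `v ++ [i]`; the binary subtree is described by the set `L` of its leaves. -/
theorem stmt_5_general (h : ℕ) (hh : 2 ≤ h) (T : Finset (List ℕ))
    (hpref : ∀ v ∈ T, ∀ u : List ℕ, u <+: v → u ∈ T)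
    (hdeg : ∀ v ∈ T, Set.ncard {i : ℕ | v ++ [i] ∈ T} ≤ h)
    (n : ℕ) (hn : n = Set.ncard {v : List ℕ | v ∈ T ∧ ∀ i : ℕ, v ++ [i] ∉ T}) :
    ∃ L : Set (List ℕ),
      L ⊆ {v : List ℕ | v ∈ T ∧ ∀ i : ℕ, v ++ [i] ∉ T} ∧
      (n : ℝ) ^ (1 / Real.logb 2 (h : ℝ)) ≤ (L.ncard : ℝ) ∧
      ∀ v : List ℕ, Set.ncard {i : ℕ | ∃ l ∈ L, (v ++ [i]) <+: l} ≤ 2 := by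
  have hh' : (2 : ℝ) ≤ h := by exact_mod_cast hh
  have hlog : 1 ≤ Real.logb 2 h := by
    rw [Real.le_logb_iff_rpow_le one_lt_two (by linarith)]
    simpa using hh'
  have hpow : (h : ℝ) ^ (1 / Real.logb 2 h) = 2 := by
    rw [one_div, Real.inv_logb, Real.rpow_logb (by linarith) (by linarith) two_pos]
  obtain ⟨L, hLsub, hLcard, hLbin⟩ := PathTree.exists_binary_subset_leaves (by positivity)
    ((div_le_one (by linarith)).2 hlog) hpow T hpref hdeg
  have hleaves : {v | v ∈ T ∧ ∀ i, v ++ [i] ∉ T} = (PathTree.leaves T : Set (List ℕ)) := by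
    ext
    simp [PathTree.mem_leaves]
  refine ⟨L, hleaves ▸ Finset.coe_subset.2 hLsub, ?_, hLbin⟩
  rwa [hn, hleaves, Set.ncard_coe_finset, Set.ncard_coe_finset]

/-- a rooted tree (encoded as a prefix-closed finite set of paths, the
children of `v` being the vertices `v ++ [i]`) with `n` leaves in which every vertex
has at most `h ≥ 2` children contains a binary subtree with at least
`n ^ (1 / log₂ h)` leaves.  The binary subtree is described by the set `L` of its
leaves: at every vertex, at most two children have a leaf of `L` below them. -/
theorem stmt_5 (h : ℕ) (hh : 2 ≤ h) (T : Finset (List ℕ)) (hroot : [] ∈ T)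
    (hpref : ∀ v ∈ T, ∀ u : List ℕ, u <+: v → u ∈ T)
    (hdeg : ∀ v ∈ T, Set.ncard {i : ℕ | v ++ [i] ∈ T} ≤ h)
    (n : ℕ) (hn : n = Set.ncard {v : List ℕ | v ∈ T ∧ ∀ i : ℕ, v ++ [i] ∉ T}) :
    ∃ L : Set (List ℕ),
      L ⊆ {v : List ℕ | v ∈ T ∧ ∀ i : ℕ, v ++ [i] ∉ T} ∧
      (n : ℝ) ^ (1 / Real.logb 2 (h : ℝ)) ≤ (L.ncard : ℝ) ∧
      ∀ v : List ℕ, Set.ncard {i : ℕ | ∃ l ∈ L, (v ++ [i]) <+: l} ≤ 2 :=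
  stmt_5_general h hh T hpref hdeg n hn
end

section
/- For reals $n_1 \ge n_2 \ge \dots \ge n_{h'} > 0$ with $h' \le h$, $h \ge 2$, and $\sum_{i=1}^{h'} n_i = n$, we have $n_1^{1/\log_2 h} + n_2^{1/\log_2 h} \ge n^{1/\log_2 h}$ (where if $h' = 1$ we interpret $n_2 = 0$ and the inequality holds trivially since $n_1 = n$). -/
/-!
Write `α = 1 / log₂ h`, so that `x ↦ x ^ α` is concave, monotone, vanishes at `0`, and satisfies
`(h m) ^ α = 2 m ^ α`. Put `m = n / h`, `a = n₁`, `b = n₂`; monotonicity of the `nᵢ` gives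
`n ≤ a + (h - 1) b`. If `b ≥ m` then `a ^ α + b ^ α ≥ 2 m ^ α = n ^ α`. Otherwise `b = t m` with
`t ∈ [0, 1)`, and `a ≥ n - (h - 1) b = (1 - t) n + t m`; concavity then bounds `a ^ α + b ^ α`
below by `(1 - t) n ^ α + 2 t m ^ α = n ^ α`.
-/

open Finset

lemma sum_Icc_le_add_mul_of_le (u : ℕ → ℝ) {k : ℕ} (hk : 1 ≤ k)
    (hu : ∀ i ∈ Finset.Ioc 1 k, u i ≤ u 2) :
    ∑ i ∈ Finset.Icc 1 k, u i ≤ u 1 + ((k : ℝ) - 1) * u 2 := by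
  have hrest : ∑ i ∈ Finset.Ioc 1 k, u i ≤ #(Finset.Ioc 1 k) • u 2 :=
    Finset.sum_le_card_nsmul _ _ _ hu
  rw [Nat.card_Ioc, nsmul_eq_mul, Nat.cast_sub hk, Nat.cast_one] at hrest
  rw [← add_sum_Ioc_eq_sum_Icc hk]
  linarith

lemma ConcaveOn.le_add_of_le_add_mul {f : ℝ → ℝ} (hconc : ConcaveOn ℝ (Set.Ici 0) f)
    (hmono : MonotoneOn f (Set.Ici 0)) (hf0 : 0 ≤ f 0) {h m a b : ℝ} (hh : 1 ≤ h) (hm : 0 ≤ m)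
    (hb : 0 ≤ b) (hba : b ≤ a) (hfm : f (h * m) ≤ 2 * f m) (hab : h * m ≤ a + (h - 1) * b) :
    f (h * m) ≤ f a + f b := by
  rcases le_or_gt m b with hmb | hbm
  · have hfb : f m ≤ f b := hmono hm (hm.trans hmb) hmb
    have hfa : f m ≤ f a := hmono hm (hm.trans (hmb.trans hba)) (hmb.trans hba)
    linarith
  · have hm0 : 0 < m := hb.trans_lt hbm
    set t := b / m
    have ht0 : 0 ≤ t := by positivity
    have ht1 : t ≤ 1 := (div_le_one hm0).2 hbm.le
    have hbt : b = (1 - t) • (0 : ℝ) + t • m := by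
      simp [t, div_mul_cancel₀ _ hm0.ne']
    have hat : h * m - (h - 1) * b = (1 - t) • (h * m) + t • m := by
      simp only [smul_eq_mul, t]
      field_simp
      ring
    have hfb : (1 - t) • f 0 + t • f m ≤ f b := by
      rw [hbt]
      exact hconc.2 Set.self_mem_Ici hm (sub_nonneg.2 ht1) ht0 (by ring)
    have hfhm : (1 - t) • f (h * m) + t • f m ≤ f (h * m - (h - 1) * b) := by
      rw [hat]
      exact hconc.2 (Set.mem_Ici.2 (by positivity)) hm (sub_nonneg.2 ht1) ht0 (by ring)
    rw [smul_eq_mul, smul_eq_mul] at hfb hfhm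
    have hmid : 0 ≤ h * m - (h - 1) * b := by
      linarith [mul_le_mul_of_nonneg_left hbm.le (sub_nonneg.2 hh)]
    have hfa : f (h * m - (h - 1) * b) ≤ f a := hmono hmid (hb.trans hba) (by linarith)
    linarith [mul_nonneg (sub_nonneg.2 ht1) hf0, mul_le_mul_of_nonneg_left hfm ht0]

/-- for reals `n₁ ≥ n₂ ≥ … ≥ n_{h'} > 0` with `1 ≤ h' ≤ h`, `h ≥ 2`, and
`∑ nᵢ = n`, one has `n₁^(1/log₂ h) + n₂^(1/log₂ h) ≥ n^(1/log₂ h)` (with `n₂`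
interpreted as `0` when `h' = 1`). -/
theorem stmt_6 (h : ℝ) (hh : 2 ≤ h) (h' : ℕ) (hh'1 : 1 ≤ h') (hh'h : (h' : ℝ) ≤ h)
    (nn : ℕ → ℝ) (n : ℝ)
    (hpos : ∀ i, 1 ≤ i → i ≤ h' → 0 < nn i)
    (hmono : ∀ i j, 1 ≤ i → i ≤ j → j ≤ h' → nn j ≤ nn i)
    (hsum : ∑ i ∈ Finset.Icc 1 h', nn i = n) :
    n ^ (1 / Real.logb 2 h) ≤
      nn 1 ^ (1 / Real.logb 2 h) +
        (if 2 ≤ h' then nn 2 ^ (1 / Real.logb 2 h) else 0) := by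
  have hh0 : 0 < h := by linarith
  have hlog : 1 ≤ Real.logb 2 h := by
    rw [Real.le_logb_iff_rpow_le one_lt_two hh0]
    simpa using hh
  have hα0 : 0 ≤ 1 / Real.logb 2 h := by positivity
  have hα1 : 1 / Real.logb 2 h ≤ 1 := (div_le_one (by linarith)).2 hlog
  have hhα : h ^ (1 / Real.logb 2 h) = 2 := by
    rw [one_div, Real.inv_logb]
    exact Real.rpow_logb hh0 (by linarith) two_pos
  split_ifs with h2
  · have hb : 0 ≤ nn 2 := (hpos 2 one_le_two h2).le
    have hn : n ≤ nn 1 + (h - 1) * nn 2 := by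
      have := sum_Icc_le_add_mul_of_le nn hh'1 fun i hi ↦
        hmono 2 i one_le_two (Finset.mem_Ioc.1 hi).1 (Finset.mem_Ioc.1 hi).2
      linarith [mul_le_mul_of_nonneg_right (sub_le_sub_right hh'h 1) hb]
    have hm : 0 ≤ n / h := by
      refine div_nonneg (hsum ▸ Finset.sum_nonneg fun i hi ↦ ?_) hh0.le
      exact (hpos i (Finset.mem_Icc.1 hi).1 (Finset.mem_Icc.1 hi).2).le
    have key := (Real.concaveOn_rpow hα0 hα1).le_add_of_le_add_mul
      (Real.monotoneOn_rpow_Ici_of_exponent_nonneg hα0) (Real.rpow_nonneg le_rfl _)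
      (by linarith : (1 : ℝ) ≤ h) hm hb (hmono 1 2 le_rfl one_le_two h2)
      (by rw [Real.mul_rpow hh0.le hm, hhα])
      (by rwa [mul_div_cancel₀ _ hh0.ne'])
    rwa [mul_div_cancel₀ _ hh0.ne'] at key
  · obtain rfl : h' = 1 := by omega
    simp [← hsum]
end

section
/- Let $Y$ be a finite metric space that is an HST whose defining tree is binary and which is a $k$-HST for some $k > 1$. Then $\Phi(Y) \ge k^{\log_2 |Y| - 1}$, where $\Phi(Y)$ is the aspect ratio of $Y$. Consequently, if a finite metric space $X$ with $|X| \ge 2$ embeds with distortion at most $\alpha$ into a binary $k$-HST, then $|X| \le 2^{1 + \log_k(\alpha \Phi(X))}$. -/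
/-- Longest common prefix of two binary paths; for two distinct leaves of a binary
tree encoded as lists of booleans, `lcp x y` is their least common ancestor. -/
def lcp : List Bool → List Bool → List Bool
  | a :: as, b :: bs => if a = b then a :: lcp as bs else []
  | _, _ => []

theorem lcp_prefix_left : ∀ x y : List Bool, lcp x y <+: x
  | a :: as, b :: bs => by
    simp only [lcp]; split
    · simpa [List.cons_prefix_cons] using lcp_prefix_left as bs
    · simp
  | [], _ => by simp [lcp]
  | a :: as, [] => by simp [lcp]

theorem lcp_prefix_right : ∀ x y : List Bool, lcp x y <+: y
  | a :: as, b :: bs => by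
    simp only [lcp]; split
    · rename_i h; subst h; simpa [List.cons_prefix_cons] using lcp_prefix_right as bs
    · simp
  | [], _ => by simp [lcp]
  | a :: as, [] => by simp [lcp]

theorem prefix_lcp : ∀ (a x y : List Bool), a <+: x → a <+: y → a <+: lcp x y
  | [], _, _, _, _ => by simp
  | c :: cs, x, y, hx, hy => by
    obtain ⟨tx, rfl⟩ := hx
    obtain ⟨ty, hy⟩ := hy
    cases y with
    | nil => simp at hy
    | cons b bs =>
      simp only [List.cons_append, List.cons.injEq] at hy
      obtain ⟨rfl, hy⟩ := hy
      simp only [List.cons_append, lcp]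
      rw [if_pos trivial, List.cons_prefix_cons]
      exact ⟨rfl, prefix_lcp cs _ _ ⟨tx, rfl⟩ ⟨ty, hy⟩⟩

theorem lcp_next : ∀ (x y : List Bool) (i j : Bool),
    lcp x y ++ [i] <+: x → lcp x y ++ [j] <+: y → i ≠ j
  | a :: as, b :: bs, i, j => by
    simp only [lcp]; split
    · rename_i h; subst h
      simp only [List.cons_append, List.cons_prefix_cons, true_and]
      intro hx hy
      exact lcp_next as bs i j hx hy
    · rename_i h
      simp only [List.nil_append, List.cons_prefix_cons]
      rintro ⟨rfl, -⟩ ⟨rfl, -⟩; exact h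
  | [], y, i, j => by simp [lcp]
  | a :: as, [], i, j => by simp [lcp]

theorem strict_prefix_succ {p s : List Bool} (h : p <+: s) (hne : p ≠ s) :
    ∃ i, p ++ [i] <+: s := by
  obtain ⟨t, rfl⟩ := h
  cases t with
  | nil => simp at hne
  | cons i t => exact ⟨i, ⟨t, by simp⟩⟩

theorem chain_lemma (S : Finset (List Bool)) (h2 : 2 ≤ S.card)
    (hanti : ∀ x ∈ S, ∀ y ∈ S, x ≠ y → ¬ x <+: y) :
    ∃ (b : ℕ) (u w : List Bool),
      (∃ x ∈ S, ∃ y ∈ S, x ≠ y ∧ u = lcp x y) ∧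
      (∃ x ∈ S, ∃ y ∈ S, x ≠ y ∧ w = lcp x y) ∧
      u <+: w ∧ u.length + b ≤ w.length + 1 ∧ S.card ≤ 2 ^ b := by
  induction S using Finset.strongInductionOn with
  | _ S IH =>
  obtain ⟨x, hx, y, hy, hxy⟩ := Finset.one_lt_card.mp h2
  rcases eq_or_lt_of_le h2 with hc2 | hc3
  · exact ⟨1, lcp x y, lcp x y, ⟨x, hx, y, hy, hxy, rfl⟩, ⟨x, hx, y, hy, hxy, rfl⟩,
      List.prefix_refl _, by omega, by omega⟩
  -- find a minimal-length lcp p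
  · set L : Finset (List Bool) :=
      ((S ×ˢ S).filter fun q => q.1 ≠ q.2).image fun q => lcp q.1 q.2 with hL
    have hLne : L.Nonempty := ⟨lcp x y, Finset.mem_image.mpr
      ⟨(x, y), Finset.mem_filter.mpr ⟨Finset.mem_product.mpr ⟨hx, hy⟩, hxy⟩, rfl⟩⟩
    obtain ⟨p, hpL, hpmin⟩ := Finset.exists_min_image L (·.length) hLne
    obtain ⟨⟨x₀, y₀⟩, hq, hp⟩ := Finset.mem_image.mp hpL
    rw [Finset.mem_filter, Finset.mem_product] at hq
    obtain ⟨⟨hx₀, hy₀⟩, hxy₀⟩ := hq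
    dsimp only at hp hx₀ hy₀ hxy₀
    have hpx : p <+: x₀ := hp ▸ lcp_prefix_left x₀ y₀
    have hpy : p <+: y₀ := hp ▸ lcp_prefix_right x₀ y₀
    have hppre : ∀ s ∈ S, p <+: s := by
      intro s hs
      by_cases hsx : s = x₀
      · exact hsx ▸ hpx
      · have hmem : lcp s x₀ ∈ L := Finset.mem_image.mpr
          ⟨(s, x₀), Finset.mem_filter.mpr ⟨Finset.mem_product.mpr ⟨hs, hx₀⟩, hsx⟩, rfl⟩
        have hlen := hpmin _ hmem
        have hple : p <+: lcp s x₀ := by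
          rcases List.prefix_or_prefix_of_prefix hpx (lcp_prefix_right s x₀) with h | h
          · exact h
          · have heq := h.eq_of_length_le hlen
            rw [heq]
        exact hple.trans (lcp_prefix_left s x₀)
    have hpne : ∀ s ∈ S, p ≠ s := by
      intro s hs heq
      by_cases hsx : s = x₀
      · subst hsx
        exact hanti s hs y₀ hy₀ hxy₀ (heq ▸ hpy)
      · exact hanti s hs x₀ hx₀ hsx (heq ▸ hpx)
    -- split into two subtrees
    have hsplit : ∀ s ∈ S, ∃ i, p ++ [i] <+: s := fun s hs =>
      strict_prefix_succ (hppre s hs) (hpne s hs)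
    have hnotboth : ∀ s : List Bool, p ++ [false] <+: s → p ++ [true] <+: s → False := by
      intro s h0 h1
      rcases List.prefix_or_prefix_of_prefix h0 h1 with h | h
      · have := h.eq_of_length_le (by simp)
        simp at this
      · have := h.eq_of_length_le (by simp)
        simp at this
    have hcardsum : (S.filter fun s => p ++ [false] <+: s).card
        + (S.filter fun s => p ++ [true] <+: s).card = S.card := by
      rw [show (S.filter fun s => p ++ [true] <+: s)
          = S.filter fun s => ¬ (p ++ [false] <+: s) from ?_]
      · exact Finset.card_filter_add_card_filter_not _
      · apply Finset.filter_congr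
        intro s hs
        obtain ⟨i, hi⟩ := hsplit s hs
        constructor
        · intro h1 h0; exact hnotboth s h0 h1
        · intro h
          cases i
          · exact absurd hi h
          · exact hi
    -- both parts are nonempty
    have hbothne : ∀ i : Bool, (S.filter fun s => p ++ [i] <+: s).Nonempty := by
      intro i
      obtain ⟨i₀, hi₀⟩ := hsplit x₀ hx₀
      obtain ⟨j₀, hj₀⟩ := hsplit y₀ hy₀
      have hij : i₀ ≠ j₀ := lcp_next x₀ y₀ i₀ j₀ (hp ▸ hi₀) (hp ▸ hj₀)
      rcases eq_or_ne i i₀ with rfl | h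
      · exact ⟨x₀, Finset.mem_filter.mpr ⟨hx₀, hi₀⟩⟩
      · have hij₀ : i = j₀ := by revert h hij; cases i <;> cases i₀ <;> cases j₀ <;> decide
        exact ⟨y₀, Finset.mem_filter.mpr ⟨hy₀, hij₀ ▸ hj₀⟩⟩
    -- the main step, applied to the larger side
    have main : ∀ i : Bool, S.card ≤ 2 * (S.filter fun s => p ++ [i] <+: s).card →
        ∃ (b : ℕ) (u w : List Bool),
          (∃ x ∈ S, ∃ y ∈ S, x ≠ y ∧ u = lcp x y) ∧
          (∃ x ∈ S, ∃ y ∈ S, x ≠ y ∧ w = lcp x y) ∧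
          u <+: w ∧ u.length + b ≤ w.length + 1 ∧ S.card ≤ 2 ^ b := by
      intro i hbig
      set S' := S.filter fun s => p ++ [i] <+: s with hS'
      have hsub : S' ⊆ S := Finset.filter_subset _ _
      have hssub : S' ⊂ S := by
        obtain ⟨z, hz⟩ := hbothne (!i)
        rw [Finset.mem_filter] at hz
        refine Finset.ssubset_iff_of_subset hsub |>.mpr ⟨z, hz.1, ?_⟩
        intro hzS'
        rw [hS', Finset.mem_filter] at hzS'
        cases i
        · exact hnotboth z hzS'.2 hz.2
        · exact hnotboth z hz.2 hzS'.2
      have h2' : 2 ≤ S'.card := by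
        have h1 : 1 ≤ (S.filter fun s => p ++ [!i] <+: s).card :=
          Finset.card_pos.mpr (hbothne (!i))
        cases i
        · simp only [Bool.not_false] at h1; omega
        · simp only [Bool.not_true] at h1; omega
      obtain ⟨b, u, w, hu, hw, huw, hlen, hcard⟩ := IH S' hssub h2'
        (fun a ha b hb => hanti a (hsub ha) b (hsub hb))
      have hpiu : p ++ [i] <+: u := by
        obtain ⟨a, ha, c, hc, hac, rfl⟩ := hu
        exact prefix_lcp _ _ _ (Finset.mem_filter.mp ha).2 (Finset.mem_filter.mp hc).2
      have hpiw : p ++ [i] <+: w := by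
        obtain ⟨a, ha, c, hc, hac, rfl⟩ := hw
        exact prefix_lcp _ _ _ (Finset.mem_filter.mp ha).2 (Finset.mem_filter.mp hc).2
      refine ⟨b + 1, p, w, ⟨x₀, hx₀, y₀, hy₀, hxy₀, hp.symm⟩, ?_, ?_, ?_, ?_⟩
      · obtain ⟨a, ha, c, hc, hac, rfl⟩ := hw
        exact ⟨a, hsub ha, c, hsub hc, hac, rfl⟩
      · exact (List.prefix_append p [i]).trans hpiw
      · have h1 : p.length + 1 ≤ u.length := by
          have := hpiu.length_le
          simp only [List.length_append, List.length_cons, List.length_nil] at this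
          omega
        omega
      · calc S.card ≤ 2 * S'.card := hbig
          _ ≤ 2 * 2 ^ b := by omega
          _ = 2 ^ (b + 1) := by ring
    rcases le_total ((S.filter fun s => p ++ [false] <+: s).card)
        ((S.filter fun s => p ++ [true] <+: s).card) with h | h
    · exact main true (by omega)
    · exact main false (by omega)

theorem hst_drop (k : ℝ) (hk : 1 < k) (T : Finset (List Bool))
    (hpref : ∀ v ∈ T, ∀ u : List Bool, u <+: v → u ∈ T)
    (Δ : List Bool → ℝ) (hΔpos : ∀ v ∈ T, 0 ≤ Δ v)
    (hHST : ∀ v ∈ T, ∀ i : Bool, v ++ [i] ∈ T → Δ (v ++ [i]) ≤ Δ v / k) :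
    ∀ (t u : List Bool), u ++ t ∈ T → k ^ t.length * Δ (u ++ t) ≤ Δ u := by
  have hk0 : (0:ℝ) < k := lt_trans one_pos hk
  intro t
  induction t with
  | nil => intro u h; simp
  | cons i t ih =>
    intro u h
    have h1 : u ++ i :: t = (u ++ [i]) ++ t := by simp
    rw [h1] at h
    have hui : u ++ [i] ∈ T := hpref _ h _ ⟨t, rfl⟩
    have hu : u ∈ T := hpref _ hui _ ⟨[i], rfl⟩
    have h2 := ih (u ++ [i]) h
    have h3 := hHST u hu i hui
    have h4 : k ^ (i :: t).length * Δ (u ++ i :: t)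
        = k * (k ^ t.length * Δ ((u ++ [i]) ++ t)) := by
      rw [h1]; simp [List.length_cons]; ring
    rw [h4]
    calc k * (k ^ t.length * Δ ((u ++ [i]) ++ t)) ≤ k * Δ (u ++ [i]) :=
          mul_le_mul_of_nonneg_left h2 hk0.le
      _ ≤ k * (Δ u / k) := mul_le_mul_of_nonneg_left h3 hk0.le
      _ = Δ u := by field_simp


/-- a binary `k`-HST `Y` (`k > 1`), encoded as a prefix-closed finite set
`T` of binary paths with labels `Δ` satisfying the `k`-HST conditions, whose metric on
the set `Y` of leaves is `d(x,y) = Δ(lca(x,y))`, satisfies `Φ(Y) ≥ k^(log₂|Y| - 1)`.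
Consequently, if a finite metric space `X` with `|X| ≥ 2` embeds with distortion at
most `α` into the leaves of such a binary `k`-HST, then
`|X| ≤ 2^(1 + log_k(α·Φ(X)))`. -/
theorem stmt_7 (k α : ℝ) (hk : 1 < k) (hα : 1 ≤ α)
    (T : Finset (List Bool)) (hroot : [] ∈ T)
    (hpref : ∀ v ∈ T, ∀ u : List Bool, u <+: v → u ∈ T)
    (Δ : List Bool → ℝ)
    (hΔpos : ∀ v ∈ T, 0 ≤ Δ v)
    (hΔ0 : ∀ v ∈ T, (Δ v = 0 ↔ ∀ i : Bool, v ++ [i] ∉ T))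
    (hHST : ∀ v ∈ T, ∀ i : Bool, v ++ [i] ∈ T → Δ (v ++ [i]) ≤ Δ v / k)
    (Y : Finset (List Bool)) (hY : ∀ v, v ∈ Y ↔ (v ∈ T ∧ ∀ i : Bool, v ++ [i] ∉ T))
    (hYcard : 2 ≤ Y.card)
    (X : Type*) [MetricSpace X] [Fintype X] (hX : 2 ≤ Fintype.card X)
    (hembed : ∃ f : X → List Bool, (∀ x, f x ∈ Y) ∧ Function.Injective f ∧
      ∃ r : ℝ, 0 < r ∧ ∀ x y : X, x ≠ y →
        r * dist x y ≤ Δ (lcp (f x) (f y)) ∧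
        Δ (lcp (f x) (f y)) ≤ α * (r * dist x y)) :
    k ^ (Real.logb 2 (Y.card : ℝ) - 1) ≤
      sSup {r | ∃ x ∈ Y, ∃ y ∈ Y, x ≠ y ∧ r = Δ (lcp x y)} /
        sInf {r | ∃ x ∈ Y, ∃ y ∈ Y, x ≠ y ∧ r = Δ (lcp x y)} ∧
    (Fintype.card X : ℝ) ≤ 2 ^ (1 + Real.logb k (α * aspectRatio X)) := by
  classical
  have hk0 : (0:ℝ) < k := lt_trans one_pos hk
  -- leaves form an antichain
  have hantiY : ∀ x ∈ Y, ∀ y ∈ Y, x ≠ y → ¬ x <+: y := by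
    intro x hx y hy hxy hpre
    obtain ⟨i, hi⟩ := strict_prefix_succ hpre hxy
    exact ((hY x).mp hx).2 i (hpref y ((hY y).mp hy).1 _ hi)
  -- lcp of two distinct leaves has positive label
  have hposlcp : ∀ x ∈ Y, ∀ y ∈ Y, x ≠ y → 0 < Δ (lcp x y) := by
    intro x hx y hy hxy
    have hxT : x ∈ T := ((hY x).mp hx).1
    have hpT : lcp x y ∈ T := hpref x hxT _ (lcp_prefix_left x y)
    have hne : lcp x y ≠ x := by
      intro h
      exact hantiY x hx y hy hxy (h ▸ lcp_prefix_right x y)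
    obtain ⟨i, hi⟩ := strict_prefix_succ (lcp_prefix_left x y) hne
    have hiT : lcp x y ++ [i] ∈ T := hpref x hxT _ hi
    refine lt_of_le_of_ne (hΔpos _ hpT) ?_
    intro h
    exact (hΔ0 _ hpT).mp h.symm i hiT
  -- the key quantitative consequence of the chain lemma
  have key : ∀ S : Finset (List Bool), S ⊆ Y → 2 ≤ S.card →
      ∃ (b : ℕ) (x₁ y₁ x₂ y₂ : List Bool), x₁ ∈ S ∧ y₁ ∈ S ∧ x₂ ∈ S ∧ y₂ ∈ S ∧
        x₁ ≠ y₁ ∧ x₂ ≠ y₂ ∧ 1 ≤ b ∧ S.card ≤ 2 ^ b ∧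
        k ^ (b - 1) * Δ (lcp x₂ y₂) ≤ Δ (lcp x₁ y₁) := by
    intro S hsub hS2
    obtain ⟨b, u, w, hu, hw, huw, hlen, hcard⟩ := chain_lemma S hS2
      (fun a ha c hc => hantiY a (hsub ha) c (hsub hc))
    obtain ⟨x₁, hx₁, y₁, hy₁, hxy₁, rfl⟩ := hu
    obtain ⟨x₂, hx₂, y₂, hy₂, hxy₂, rfl⟩ := hw
    have hb1 : 1 ≤ b := by
      rcases Nat.eq_zero_or_pos b with rfl | h
      · simp at hcard; omega
      · exact h
    have hwT : lcp x₂ y₂ ∈ T := hpref x₂ ((hY x₂).mp (hsub hx₂)).1 _ (lcp_prefix_left x₂ y₂)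
    obtain ⟨t, ht⟩ := huw
    have hdrop := hst_drop k hk T hpref Δ hΔpos hHST t (lcp x₁ y₁) (ht ▸ hwT)
    rw [ht] at hdrop
    have htlen : b - 1 ≤ t.length := by
      have : (lcp x₂ y₂).length = (lcp x₁ y₁).length + t.length := by
        rw [← ht]; simp
      omega
    have hΔw : 0 ≤ Δ (lcp x₂ y₂) := hΔpos _ hwT
    refine ⟨b, x₁, y₁, x₂, y₂, hx₁, hy₁, hx₂, hy₂, hxy₁, hxy₂, hb1, hcard, ?_⟩
    calc k ^ (b - 1) * Δ (lcp x₂ y₂) ≤ k ^ t.length * Δ (lcp x₂ y₂) :=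
          mul_le_mul_of_nonneg_right (pow_le_pow_right₀ hk.le htlen) hΔw
      _ ≤ Δ (lcp x₁ y₁) := hdrop
  constructor
  · -- Part 1
    set Dset := {r | ∃ x ∈ Y, ∃ y ∈ Y, x ≠ y ∧ r = Δ (lcp x y)} with hDset
    have hDsub : Dset ⊆ ↑(((Y ×ˢ Y).filter fun q => q.1 ≠ q.2).image
        fun q => Δ (lcp q.1 q.2)) := by
      rintro r ⟨a, ha, c, hc, hac, rfl⟩
      exact Finset.mem_coe.mpr (Finset.mem_image.mpr
        ⟨(a, c), Finset.mem_filter.mpr ⟨Finset.mem_product.mpr ⟨ha, hc⟩, hac⟩, rfl⟩)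
    have hDfin : Dset.Finite := (Finset.finite_toSet _).subset hDsub
    have hDmem : ∀ a ∈ Y, ∀ c ∈ Y, a ≠ c → Δ (lcp a c) ∈ Dset :=
      fun a ha c hc hac => ⟨a, ha, c, hc, hac, rfl⟩
    obtain ⟨b, x₁, y₁, x₂, y₂, hx₁, hy₁, hx₂, hy₂, hxy₁, hxy₂, hb1, hcard, hineq⟩ :=
      key Y Finset.Subset.rfl hYcard
    have hDne : Dset.Nonempty := ⟨_, hDmem x₁ hx₁ y₁ hy₁ hxy₁⟩
    have hDpos : ∀ r ∈ Dset, 0 < r := by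
      rintro r ⟨a, ha, c, hc, hac, rfl⟩
      exact hposlcp a ha c hc hac
    have hmpos : 0 < sInf Dset := hDpos _ (hDne.csInf_mem hDfin)
    have hMle : Δ (lcp x₁ y₁) ≤ sSup Dset := le_csSup hDfin.bddAbove (hDmem _ hx₁ _ hy₁ hxy₁)
    have hmle : sInf Dset ≤ Δ (lcp x₂ y₂) := csInf_le hDfin.bddBelow (hDmem _ hx₂ _ hy₂ hxy₂)
    have hpow : k ^ (b - 1) ≤ sSup Dset / sInf Dset := by
      rw [le_div_iff₀ hmpos]
      calc k ^ (b - 1) * sInf Dset ≤ k ^ (b - 1) * Δ (lcp x₂ y₂) :=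
            mul_le_mul_of_nonneg_left hmle (pow_nonneg hk0.le _)
        _ ≤ Δ (lcp x₁ y₁) := hineq
        _ ≤ sSup Dset := hMle
    have hlogb : Real.logb 2 (Y.card : ℝ) ≤ (b : ℝ) := by
      rw [Real.logb_le_iff_le_rpow one_lt_two (by positivity : (0:ℝ) < (Y.card : ℝ))]
      rw [Real.rpow_natCast]
      exact_mod_cast hcard
    calc k ^ (Real.logb 2 (Y.card : ℝ) - 1) ≤ k ^ ((b : ℝ) - 1) :=
          (Real.rpow_le_rpow_left_iff hk).mpr (by linarith)
      _ = k ^ (b - 1 : ℕ) := by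
          rw [show ((b : ℝ) - 1) = ((b - 1 : ℕ) : ℝ) by
            rw [Nat.cast_sub hb1]; norm_num]
          exact Real.rpow_natCast k (b - 1)
      _ ≤ sSup Dset / sInf Dset := hpow
  · -- Part 2
    obtain ⟨f, hfY, hinj, r, hr, hdist⟩ := hembed
    set S := Finset.univ.image f with hS
    have hScard : S.card = Fintype.card X := by
      rw [hS, Finset.card_image_of_injective _ hinj, Finset.card_univ]
    have hSsub : S ⊆ Y := by
      intro v hv
      obtain ⟨a, -, rfl⟩ := Finset.mem_image.mp hv
      exact hfY a
    obtain ⟨b, a₁, c₁, a₂, c₂, ha₁, hc₁, ha₂, hc₂, hac₁, hac₂, hb1, hcard, hineq⟩ :=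
      key S hSsub (by omega)
    obtain ⟨x₁, -, rfl⟩ := Finset.mem_image.mp ha₁
    obtain ⟨y₁, -, rfl⟩ := Finset.mem_image.mp hc₁
    obtain ⟨x₂, -, rfl⟩ := Finset.mem_image.mp ha₂
    obtain ⟨y₂, -, rfl⟩ := Finset.mem_image.mp hc₂
    have hxy₁ : x₁ ≠ y₁ := fun h => hac₁ (h ▸ rfl)
    have hxy₂ : x₂ ≠ y₂ := fun h => hac₂ (h ▸ rfl)
    -- the min-distance set of X
    set mset := {r | ∃ x y : X, x ≠ y ∧ r = dist x y} with hmset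
    have hmsub : mset ⊆ ↑(((Finset.univ ×ˢ Finset.univ : Finset (X × X)).filter
        fun q => q.1 ≠ q.2).image fun q => dist q.1 q.2) := by
      rintro ρ ⟨a, c, hac, rfl⟩
      exact Finset.mem_coe.mpr (Finset.mem_image.mpr
        ⟨(a, c), Finset.mem_filter.mpr
          ⟨Finset.mem_product.mpr ⟨Finset.mem_univ _, Finset.mem_univ _⟩, hac⟩, rfl⟩)
    have hmfin : mset.Finite := (Finset.finite_toSet _).subset hmsub
    have hmne : mset.Nonempty := ⟨_, x₂, y₂, hxy₂, rfl⟩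
    have hmX : 0 < sInf mset := by
      obtain ⟨a, c, hac, h⟩ := hmne.csInf_mem hmfin
      rw [h]
      exact dist_pos.mpr hac
    have hmle : sInf mset ≤ dist x₂ y₂ := csInf_le hmfin.bddBelow ⟨x₂, y₂, hxy₂, rfl⟩
    have hDx : dist x₁ y₁ ≤ Metric.diam (Set.univ : Set X) :=
      Metric.dist_le_diam_of_mem (Set.finite_univ.isBounded) trivial trivial
    have hAR : aspectRatio X = Metric.diam (Set.univ : Set X) / sInf mset := rfl
    -- main inequality: k^(b-1) ≤ α * Φ(X)
    have hmain : k ^ (b - 1) ≤ α * aspectRatio X := by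
      have h1 : r * dist x₂ y₂ ≤ Δ (lcp (f x₂) (f y₂)) := (hdist x₂ y₂ hxy₂).1
      have h2 : Δ (lcp (f x₁) (f y₁)) ≤ α * (r * dist x₁ y₁) := (hdist x₁ y₁ hxy₁).2
      have h3 : k ^ (b - 1) * (r * sInf mset) ≤ α * (r * Metric.diam (Set.univ : Set X)) := by
        calc k ^ (b - 1) * (r * sInf mset) ≤ k ^ (b - 1) * (r * dist x₂ y₂) := by
              apply mul_le_mul_of_nonneg_left _ (pow_nonneg hk0.le _)
              exact mul_le_mul_of_nonneg_left hmle hr.le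
          _ ≤ k ^ (b - 1) * Δ (lcp (f x₂) (f y₂)) :=
              mul_le_mul_of_nonneg_left h1 (pow_nonneg hk0.le _)
          _ ≤ Δ (lcp (f x₁) (f y₁)) := hineq
          _ ≤ α * (r * dist x₁ y₁) := h2
          _ ≤ α * (r * Metric.diam (Set.univ : Set X)) := by
              apply mul_le_mul_of_nonneg_left _ (by linarith)
              exact mul_le_mul_of_nonneg_left hDx hr.le
      have e1 : k ^ (b - 1) * (r * sInf mset) = r * (k ^ (b - 1) * sInf mset) := by ring
      have e2 : α * (r * Metric.diam (Set.univ : Set X))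
          = r * (α * Metric.diam (Set.univ : Set X)) := by ring
      rw [e1, e2] at h3
      have h4 := le_of_mul_le_mul_left h3 hr
      have e3 : α * (Metric.diam (Set.univ : Set X) / sInf mset)
          = α * Metric.diam (Set.univ : Set X) / sInf mset := by ring
      rw [hAR, e3, le_div_iff₀ hmX]
      exact h4
    have ht0 : (0:ℝ) < α * aspectRatio X := lt_of_lt_of_le (pow_pos hk0 _) hmain
    have hble : ((b - 1 : ℕ) : ℝ) ≤ Real.logb k (α * aspectRatio X) := by
      rw [Real.le_logb_iff_rpow_le hk ht0, Real.rpow_natCast]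
      exact hmain
    have hbcast : ((b : ℕ) : ℝ) ≤ 1 + Real.logb k (α * aspectRatio X) := by
      rw [Nat.cast_sub hb1] at hble
      push_cast at hble ⊢
      linarith
    calc (Fintype.card X : ℝ) ≤ ((2 : ℝ)) ^ (b : ℕ) := by
          exact_mod_cast hScard ▸ hcard
      _ = (2:ℝ) ^ ((b : ℕ) : ℝ) := (Real.rpow_natCast 2 b).symm
      _ ≤ 2 ^ (1 + Real.logb k (α * aspectRatio X)) :=
          (Real.rpow_le_rpow_left_iff one_lt_two).mpr hbcast
end

section
/- Let $M$ be a finite metric space with $k > 2$ such that for every three distinct points $x, y, z \in M$, the ratio of the maximum to the minimum of the three pairwise distances among them is at least $k$. Then $M$ embeds with distortion at most $k/(k-2)$ into a binary $(k/2)$-HST. -/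
section

open Metric Finset

structure BinaryHST (q : ℝ) where
  tree : Finset (List Bool)
  label : List Bool → ℝ
  nil_mem : [] ∈ tree
  mem_of_prefix : ∀ v ∈ tree, ∀ u : List Bool, u <+: v → u ∈ tree
  label_nonneg : ∀ v ∈ tree, 0 ≤ label v
  label_eq_zero_iff : ∀ v ∈ tree, (label v = 0 ↔ ∀ i : Bool, v ++ [i] ∉ tree)
  label_append_le : ∀ v ∈ tree, ∀ i : Bool, v ++ [i] ∈ tree →
    label (v ++ [i]) ≤ label v / q

namespace BinaryHST

variable {q : ℝ}

def IsLeaf (H : BinaryHST q) (v : List Bool) : Prop :=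
  v ∈ H.tree ∧ ∀ i : Bool, v ++ [i] ∉ H.tree

def leaf (q : ℝ) : BinaryHST q where
  tree := {[]}
  label := 0
  nil_mem := mem_singleton_self _
  mem_of_prefix := by
    rintro v hv u hu
    rw [mem_singleton] at hv ⊢
    exact List.prefix_nil.mp (hv ▸ hu)
  label_nonneg _ _ := le_rfl
  label_eq_zero_iff v hv := by simp_all
  label_append_le v _ i hi := by simp at hi

lemma isLeaf_leaf_iff {v : List Bool} : (leaf q).IsLeaf v ↔ v = [] := by
  simp [IsLeaf, leaf]

def nodeTree (t : Bool → Finset (List Bool)) : Finset (List Bool) :=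
  insert [] (univ.biUnion fun i => (t i).image (List.cons i))

def nodeLabel (D : ℝ) (l : Bool → List Bool → ℝ) : List Bool → ℝ
  | [] => D
  | i :: w => l i w

@[simp]
lemma nil_mem_nodeTree (t : Bool → Finset (List Bool)) : [] ∈ nodeTree t :=
  mem_insert_self _ _

@[simp]
lemma cons_mem_nodeTree {t : Bool → Finset (List Bool)} {i : Bool} {w : List Bool} :
    i :: w ∈ nodeTree t ↔ w ∈ t i := by
  cases i <;> simp [nodeTree]

def node (D : ℝ) (hD : 0 < D) (t : Bool → BinaryHST q) (ht : ∀ i, (t i).label [] ≤ D / q) :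
    BinaryHST q where
  tree := nodeTree fun i => (t i).tree
  label := nodeLabel D fun i => (t i).label
  nil_mem := nil_mem_nodeTree _
  mem_of_prefix := by
    rintro (_ | ⟨j, w⟩) hv (_ | ⟨i, u⟩) hu
    · exact nil_mem_nodeTree _
    · simp at hu
    · exact nil_mem_nodeTree _
    · obtain ⟨rfl, hwu⟩ := List.cons_prefix_cons.mp hu
      rw [cons_mem_nodeTree] at hv ⊢
      exact (t i).mem_of_prefix w hv u hwu
  label_nonneg := by
    rintro (_ | ⟨i, w⟩) hv
    · exact hD.le
    · exact (t i).label_nonneg w (cons_mem_nodeTree.mp hv)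
  label_eq_zero_iff := by
    rintro (_ | ⟨i, w⟩) hv
    · simpa [nodeLabel, hD.ne'] using fun h => absurd (t false).nil_mem h
    · simpa [nodeLabel] using (t i).label_eq_zero_iff w (cons_mem_nodeTree.mp hv)
  label_append_le := by
    rintro (_ | ⟨j, w⟩) hv i hi
    · exact ht i
    · exact (t j).label_append_le w (cons_mem_nodeTree.mp hv) i (cons_mem_nodeTree.mp hi)

lemma isLeaf_node_cons_iff {D : ℝ} {hD : 0 < D} {t : Bool → BinaryHST q}
    {ht : ∀ i, (t i).label [] ≤ D / q} {i : Bool} {w : List Bool} :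
    (node D hD t ht).IsLeaf (i :: w) ↔ (t i).IsLeaf w := by
  simp [IsLeaf, node]

lemma not_isLeaf_node_nil {D : ℝ} {hD : 0 < D} {t : Bool → BinaryHST q}
    {ht : ∀ i, (t i).label [] ≤ D / q} : ¬ (node D hD t ht).IsLeaf [] := by
  simpa [IsLeaf, node] using fun h => absurd (t false).nil_mem h

end BinaryHST

lemma lcp_cons_cons (i j : Bool) (u v : List Bool) :
    lcp (i :: u) (j :: v) = if i = j then i :: lcp u v else [] := rfl

variable {M : Type*} [MetricSpace M]

lemma Finset.Nonempty.exists_dist_eq_diam {s : Finset M} (hs : s.Nonempty) :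
    ∃ a ∈ s, ∃ b ∈ s, dist a b = diam (s : Set M) := by
  obtain ⟨p, hp, hmax⟩ := (s ×ˢ s).exists_max_image (fun p => dist p.1 p.2) (hs.product hs)
  obtain ⟨ha, hb⟩ := mem_product.mp hp
  refine ⟨p.1, ha, p.2, hb, le_antisymm (dist_le_diam_of_mem s.finite_toSet.isBounded ha hb) ?_⟩
  exact diam_le_of_forall_dist_le dist_nonneg fun x hx y hy =>
    hmax (x, y) (mem_product.mpr ⟨hx, hy⟩)

lemma Finset.Nontrivial.diam_pos {s : Finset M} (hs : s.Nontrivial) : 0 < diam (s : Set M) := by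
  obtain ⟨x, hx, y, hy, hxy⟩ := hs
  exact (dist_pos.mpr hxy).trans_le (dist_le_diam_of_mem s.finite_toSet.isBounded hx hy)

structure HSTEmbedding (q c : ℝ) (s : Finset M) where
  hst : BinaryHST q
  toFun : M → List Bool
  injOn : Set.InjOn toFun s
  isLeaf : ∀ x ∈ s, hst.IsLeaf (toFun x)
  exists_eq_of_isLeaf : ∀ v, hst.IsLeaf v → ∃ x ∈ s, toFun x = v
  label_nil : hst.label [] = diam (s : Set M)
  dist_le_label_lcp : ∀ x ∈ s, ∀ y ∈ s, x ≠ y →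
    dist x y ≤ hst.label (lcp (toFun x) (toFun y))
  label_lcp_le : ∀ x ∈ s, ∀ y ∈ s, x ≠ y →
    hst.label (lcp (toFun x) (toFun y)) ≤ c * dist x y

namespace HSTEmbedding

variable {q c : ℝ}

def singleton (x : M) : HSTEmbedding q c {x} where
  hst := BinaryHST.leaf q
  toFun _ := []
  injOn := by simp
  isLeaf _ _ := BinaryHST.isLeaf_leaf_iff.mpr rfl
  exists_eq_of_isLeaf v hv := ⟨x, mem_singleton_self x, (BinaryHST.isLeaf_leaf_iff.mp hv).symm⟩
  label_nil := by simp [BinaryHST.leaf]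
  dist_le_label_lcp := by simp
  label_lcp_le := by simp

noncomputable def join {s : Finset M} (side : M → Bool)
    (E : ∀ i, HSTEmbedding q c (s.filter (side · = i))) (hD : 0 < diam (s : Set M))
    (hchild : ∀ i, diam (↑(s.filter (side · = i)) : Set M) ≤ diam (s : Set M) / q)
    (hcross : ∀ x ∈ s, ∀ y ∈ s, side x ≠ side y → diam (s : Set M) ≤ c * dist x y) :
    HSTEmbedding q c s where
  hst := .node _ hD (fun i => (E i).hst) fun i => (E i).label_nil ▸ hchild i
  toFun x := side x :: (E (side x)).toFun x
  injOn x hx y hy h := by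
    obtain ⟨hside, h⟩ := List.cons.inj h
    rw [hside] at h
    exact (E (side y)).injOn (mem_filter.mpr ⟨hx, hside⟩) (mem_filter.mpr ⟨hy, rfl⟩) h
  isLeaf x hx := BinaryHST.isLeaf_node_cons_iff.mpr ((E _).isLeaf x (mem_filter.mpr ⟨hx, rfl⟩))
  exists_eq_of_isLeaf := by
    rintro (_ | ⟨i, w⟩) hv
    · exact absurd hv BinaryHST.not_isLeaf_node_nil
    · obtain ⟨x, hx, rfl⟩ := (E i).exists_eq_of_isLeaf w (BinaryHST.isLeaf_node_cons_iff.mp hv)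
      obtain ⟨hxs, rfl⟩ := mem_filter.mp hx
      exact ⟨x, hxs, rfl⟩
  label_nil := rfl
  dist_le_label_lcp x hx y hy hxy := by
    change dist x y ≤ BinaryHST.nodeLabel _ _ (lcp (side x :: _) (side y :: _))
    rw [lcp_cons_cons]
    split_ifs with hside
    · simp only [BinaryHST.nodeLabel]
      rw [hside]
      exact (E _).dist_le_label_lcp x (mem_filter.mpr ⟨hx, hside⟩) y
        (mem_filter.mpr ⟨hy, rfl⟩) hxy
    · exact dist_le_diam_of_mem s.finite_toSet.isBounded hx hy
  label_lcp_le x hx y hy hxy := by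
    change BinaryHST.nodeLabel _ _ (lcp (side x :: _) (side y :: _)) ≤ c * dist x y
    rw [lcp_cons_cons]
    split_ifs with hside
    · simp only [BinaryHST.nodeLabel]
      rw [hside]
      exact (E _).label_lcp_le x (mem_filter.mpr ⟨hx, hside⟩) y (mem_filter.mpr ⟨hy, rfl⟩)
        hxy
    · exact hcross x hx y hy hside

end HSTEmbedding

def TriangleRatioGE (k : ℝ) (M : Type*) [Dist M] : Prop :=
  ∀ x y z : M, x ≠ y → x ≠ z → y ≠ z →
    k * min (min (dist x y) (dist x z)) (dist y z) ≤ max (max (dist x y) (dist x z)) (dist y z)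

section TriangleRatioGE

variable {k : ℝ}

/-- Otherwise all three sides of the triangle `a, b, z` would exceed `diam s / k`, while the
longest is at most `diam s`. -/
lemma dist_le_of_dist_eq_diam (htri : TriangleRatioGE k M) (hk : 1 < k) {s : Finset M}
    {a b z : M} (ha : a ∈ s) (hb : b ∈ s) (hz : z ∈ s) (hab : dist a b = diam (s : Set M))
    (hza : diam (s : Set M) / k < dist z a) :
    dist z b ≤ diam (s : Set M) / k := by
  set D := diam (s : Set M)
  have hle : ∀ x ∈ s, ∀ y ∈ s, dist x y ≤ D := fun x hx y hy =>
    dist_le_diam_of_mem s.finite_toSet.isBounded hx hy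
  have hk0 : 0 < k := by linarith
  have hDk : 0 ≤ D / k := div_nonneg diam_nonneg hk0.le
  by_contra! hzb
  have hDab : D / k < dist a b := by
    rw [hab]
    exact div_lt_self (hDk.trans_lt hza |>.trans_le (hle z hz a ha)) hk
  rw [dist_comm] at hza hzb
  have hmin : D < k * min (min (dist a b) (dist a z)) (dist b z) := by
    rw [← div_lt_iff₀' hk0]
    exact lt_min (lt_min hDab hza) hzb
  have hmax : max (max (dist a b) (dist a z)) (dist b z) ≤ D :=
    max_le (max_le (hle a ha b hb) (hle a ha z hz)) (hle b hb z hz)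
  have := htri a b z (dist_pos.mp (hDk.trans_lt hDab)) (dist_pos.mp (hDk.trans_lt hza))
    (dist_pos.mp (hDk.trans_lt hzb))
  linarith

/-- Split `s` by distance `diam s / k` from one end `a` of a diametral pair `a, b`: each part
lies within `diam s / k` of its own end, and the two ends are `diam s` apart. -/
lemma exists_side_of_nontrivial (htri : TriangleRatioGE k M) (hk : 2 < k) {s : Finset M}
    (hs : s.Nontrivial) :
    ∃ side : M → Bool, (∀ i, ∃ x ∈ s, side x = i) ∧
      (∀ i, diam (↑(s.filter (side · = i)) : Set M) ≤ diam (s : Set M) / (k / 2)) ∧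
      ∀ x ∈ s, ∀ y ∈ s, side x ≠ side y →
        diam (s : Set M) ≤ k / (k - 2) * dist x y := by
  obtain ⟨a, ha, b, hb, hab⟩ := hs.nonempty.exists_dist_eq_diam
  set D := diam (s : Set M)
  have hD : 0 < D := hs.diam_pos
  have hk0 : 0 < k := by linarith
  let side : M → Bool := fun z => decide (D / k < dist z a)
  let center : Bool → M := fun i => cond i b a
  have hside_center : ∀ i, side (center i) = i := by
    rintro (_ | _)
    · simpa [side, center] using div_nonneg hD.le hk0.le
    · simpa [side, center, dist_comm, hab] using div_lt_self hD (by linarith)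
  have hcenter_mem : ∀ i, center i ∈ s := by rintro (_ | _) <;> assumption
  have hnear : ∀ z ∈ s, dist z (center (side z)) ≤ D / k := by
    intro z hz
    by_cases hza : D / k < dist z a
    · simpa [side, center, hza] using dist_le_of_dist_eq_diam htri (by linarith) ha hb hz hab hza
    · simpa [side, center, hza] using not_lt.mp hza
  have hcenters : ∀ i, dist (center i) (center (!i)) = D := by
    rintro (_ | _) <;> simp [center, hab, dist_comm]
  refine ⟨side, fun i => ⟨center i, hcenter_mem i, hside_center i⟩, fun i => ?_, ?_⟩
  · refine diam_le_of_forall_dist_le (by positivity) fun x hx y hy => ?_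
    obtain ⟨hxs, rfl⟩ := mem_filter.mp hx
    obtain ⟨hys, hyx⟩ := mem_filter.mp hy
    calc dist x y ≤ dist x (center (side x)) + dist y (center (side x)) :=
          dist_triangle_right _ _ _
      _ ≤ D / k + D / k := add_le_add (hnear x hxs) (hyx ▸ hnear y hys)
      _ = D / (k / 2) := by field_simp; ring
  · intro x hx y hy hxy
    have hyx : side y = !side x := by revert hxy; cases side x <;> cases side y <;> simp
    have : D ≤ D / k + dist x y + D / k :=
      calc D = dist (center (side x)) (center (side y)) := by rw [hyx, hcenters]
        _ ≤ dist (center (side x)) x + dist x y + dist y (center (side y)) :=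
          dist_triangle4 _ _ _ _
        _ ≤ D / k + dist x y + D / k := by
          rw [dist_comm]; gcongr <;> apply hnear <;> assumption
    rw [div_mul_eq_mul_div, le_div_iff₀ (by linarith)]
    field_simp at this
    linarith

theorem exists_hstEmbedding (htri : TriangleRatioGE k M) (hk : 2 < k) {s : Finset M}
    (hs : s.Nonempty) :
    Nonempty (HSTEmbedding (k / 2) (k / (k - 2)) s) := by
  induction s using Finset.strongInduction with
  | H s ih =>
  obtain ⟨x, rfl⟩ | hs := hs.exists_eq_singleton_or_nontrivial
  · exact ⟨.singleton x⟩
  obtain ⟨side, hsurj, hchild, hcross⟩ := exists_side_of_nontrivial htri hk hs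
  have hssub : ∀ i, s.filter (side · = i) ⊂ s := fun i =>
    let ⟨x, hx, hxi⟩ := hsurj !i
    filter_ssubset.mpr ⟨x, hx, by simp [hxi]⟩
  have E : ∀ i, HSTEmbedding (k / 2) (k / (k - 2)) (s.filter (side · = i)) := fun i =>
    (ih _ (hssub i) (filter_nonempty_iff.mpr (hsurj i))).some
  exact ⟨.join side E hs.diam_pos hchild hcross⟩

end TriangleRatioGE

end

/-- a finite metric space `M` (`k > 2`) in which every three distinct
points have max-to-min distance ratio at least `k` embeds with distortion at most
`k/(k-2)` into a binary `(k/2)`-HST: a prefix-closed finite set `T` of binary paths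
with labels `Δ` satisfying the `(k/2)`-HST conditions, together with a bijection `f`
of `M` onto the leaves of `T` such that for some scale `r > 0`,
`r·d(x,y) ≤ Δ(lca(f x, f y)) ≤ (k/(k-2))·r·d(x,y)`. -/
theorem stmt_11 {M : Type*} [MetricSpace M] [Fintype M] [Nonempty M]
    (k : ℝ) (hk : 2 < k)
    (htri : ∀ x y z : M, x ≠ y → x ≠ z → y ≠ z →
      k * min (min (dist x y) (dist x z)) (dist y z) ≤
        max (max (dist x y) (dist x z)) (dist y z)) :
    ∃ (T : Finset (List Bool)) (Δ : List Bool → ℝ),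
      [] ∈ T ∧
      (∀ v ∈ T, ∀ u : List Bool, u <+: v → u ∈ T) ∧
      (∀ v ∈ T, 0 ≤ Δ v) ∧
      (∀ v ∈ T, (Δ v = 0 ↔ ∀ i : Bool, v ++ [i] ∉ T)) ∧
      (∀ v ∈ T, ∀ i : Bool, v ++ [i] ∈ T → Δ (v ++ [i]) ≤ Δ v / (k / 2)) ∧
      ∃ f : M → List Bool, Function.Injective f ∧
        (∀ x : M, f x ∈ T ∧ ∀ i : Bool, f x ++ [i] ∉ T) ∧
        (∀ v ∈ T, (∀ i : Bool, v ++ [i] ∉ T) → ∃ x : M, f x = v) ∧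
        ∃ r : ℝ, 0 < r ∧ ∀ x y : M, x ≠ y →
          r * dist x y ≤ Δ (lcp (f x) (f y)) ∧
          Δ (lcp (f x) (f y)) ≤ (k / (k - 2)) * (r * dist x y) := by
  obtain ⟨E⟩ := exists_hstEmbedding htri hk Finset.univ_nonempty
  let H := E.hst
  refine ⟨H.tree, H.label, H.nil_mem, H.mem_of_prefix, H.label_nonneg, H.label_eq_zero_iff,
    H.label_append_le, E.toFun, fun x y => E.injOn (Finset.mem_univ x) (Finset.mem_univ y),
    fun x => E.isLeaf x (Finset.mem_univ x), fun v hv hleaf => ?_, 1, one_pos, fun x y hxy => ?_⟩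
  · obtain ⟨x, -, hx⟩ := E.exists_eq_of_isLeaf v ⟨hv, hleaf⟩
    exact ⟨x, hx⟩
  · rw [one_mul]
    exact ⟨E.dist_le_label_lcp x (Finset.mem_univ x) y (Finset.mem_univ y) hxy,
      E.label_lcp_le x (Finset.mem_univ x) y (Finset.mem_univ y) hxy⟩
end

section
/- Let $M$ and $N$ be finite metric spaces and $\beta > \alpha \ge 1$. Let $L = M_\beta[N]$ be the $\beta$-composition. Then every subset $S \subseteq L$ with aspect ratio $\Phi(S) \le \alpha$ embeds isometrically into either $M$ or $N$. -/
/-- let `M`, `N` be finite metric spaces, `β > α ≥ 1`, and let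
`L = M_β[N]` be the `β`-composition, with distance `d_N(j,l)` inside a copy of `N`
and `β·γ·d_M(i,k)` across copies, where `γ = diam(N)/min_{i≠k} d_M(i,k)`.  Then every
subset `S ⊆ L` with aspect ratio `Φ(S) ≤ α` embeds isometrically (up to a common
scale factor) into `M` or into `N`. -/
theorem stmt_12 {M N : Type*} [MetricSpace M] [Fintype M] [Nontrivial M] [DecidableEq M]
    [MetricSpace N] [Fintype N] [Nontrivial N]
    (α β : ℝ) (hα : 1 ≤ α) (hβ : α < β)
    (γ : ℝ)
    (hγ : γ = Metric.diam (Set.univ : Set N) /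
      sInf {r | ∃ i k : M, i ≠ k ∧ r = dist i k})
    (dL : M × N → M × N → ℝ)
    (hdL : ∀ p q : M × N,
      dL p q = if p.1 = q.1 then dist p.2 q.2 else β * γ * dist p.1 q.1)
    (S : Set (M × N))
    (hΦ : ∀ p ∈ S, ∀ q ∈ S, ∀ p' ∈ S, ∀ q' ∈ S, p ≠ q → p' ≠ q' →
      dL p q ≤ α * dL p' q') :
    (∃ f : M × N → M, Set.InjOn f S ∧ ∃ c : ℝ, 0 < c ∧
        ∀ p ∈ S, ∀ q ∈ S, dL p q = c * dist (f p) (f q)) ∨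
    (∃ g : M × N → N, Set.InjOn g S ∧ ∃ c : ℝ, 0 < c ∧
        ∀ p ∈ S, ∀ q ∈ S, dL p q = c * dist (g p) (g q)) := by
  set T : Set ℝ := {r | ∃ i k : M, i ≠ k ∧ r = dist i k} with hT
  set m : ℝ := sInf T with hm
  set D : ℝ := Metric.diam (Set.univ : Set N) with hD
  -- T is nonempty and finite
  obtain ⟨a, b, hab⟩ := exists_pair_ne M
  have hTne : T.Nonempty := ⟨dist a b, a, b, hab, rfl⟩
  have hTfin : T.Finite := by
    have : T ⊆ (fun p : M × M => dist p.1 p.2) '' Set.univ := by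
      rintro r ⟨i, k, _, rfl⟩; exact ⟨(i, k), trivial, rfl⟩
    exact Set.Finite.subset (Set.finite_univ.image _) this
  have hmem : m ∈ T := hTne.csInf_mem hTfin
  have hmpos : 0 < m := by
    obtain ⟨i, k, hik, hr⟩ := hmem
    rw [hr]; exact dist_pos.mpr hik
  have hmle : ∀ i k : M, i ≠ k → m ≤ dist i k := fun i k hik =>
    csInf_le hTfin.bddBelow ⟨i, k, hik, rfl⟩
  -- D > 0
  obtain ⟨x, y, hxy⟩ := exists_pair_ne N
  have hDpos : 0 < D := by
    have hb : Bornology.IsBounded (Set.univ : Set N) := Set.finite_univ.isBounded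
    have := Metric.dist_le_diam_of_mem hb (Set.mem_univ x) (Set.mem_univ y)
    exact lt_of_lt_of_le (dist_pos.mpr hxy) this
  have hγpos : 0 < γ := by rw [hγ]; exact div_pos hDpos hmpos
  -- key: γ * dist i k ≥ D for i ≠ k
  have hkey : ∀ i k : M, i ≠ k → D ≤ γ * dist i k := by
    intro i k hik
    rw [hγ]
    rw [div_mul_eq_mul_div, le_div_iff₀ hmpos]
    have := hmle i k hik
    nlinarith [hDpos.le]
  by_cases hsame : ∀ p ∈ S, ∀ q ∈ S, p.1 = q.1
  · -- embed into N
    right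
    refine ⟨Prod.snd, ?_, 1, one_pos, ?_⟩
    · intro p hp q hq h2
      exact Prod.ext (hsame p hp q hq) h2
    · intro p hp q hq
      rw [hdL, if_pos (hsame p hp q hq), one_mul]
  · -- embed into M
    left
    push_neg at hsame
    have hβpos : 0 < β := by linarith
    obtain ⟨p', hp', q', hq', hne1⟩ := hsame
    have hne' : p' ≠ q' := fun h => hne1 (by rw [h])
    -- no two distinct points of S share first coordinate
    have hinj : ∀ p ∈ S, ∀ q ∈ S, p.1 = q.1 → p = q := by
      intro p hp q hq h1
      by_contra hne
      have hΦ' := hΦ p' hp' q' hq' p hp q hq hne' hne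
      have e1 : dL p' q' = β * γ * dist p'.1 q'.1 := by rw [hdL, if_neg hne1]
      have e2 : dL p q = dist p.2 q.2 := by rw [hdL, if_pos h1]
      have hd2 : dist p.2 q.2 ≤ D := by
        exact Metric.dist_le_diam_of_mem Set.finite_univ.isBounded
          (Set.mem_univ _) (Set.mem_univ _)
      have hk := hkey p'.1 q'.1 hne1
      -- dL p' q' ≥ β * D
      have h3 : β * D ≤ dL p' q' := by
        rw [e1]
        have : β * D ≤ β * (γ * dist p'.1 q'.1) :=
          mul_le_mul_of_nonneg_left hk (by linarith)
        linarith [this]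
      have h4 : dL p q ≤ D := by rw [e2]; exact hd2
      have : β * D ≤ α * D := by
        calc β * D ≤ dL p' q' := h3
          _ ≤ α * dL p q := hΦ'
          _ ≤ α * D := mul_le_mul_of_nonneg_left h4 (by linarith)
      nlinarith
    refine ⟨Prod.fst, ?_, β * γ, mul_pos hβpos hγpos, ?_⟩
    · intro p hp q hq h1; exact hinj p hp q hq h1
    · intro p hp q hq
      by_cases h1 : p.1 = q.1
      · have := hinj p hp q hq h1
        subst this
        rw [hdL, if_pos rfl]; simp
      · rw [hdL, if_neg h1]
end

section
/- Let $M, N$ be finite metric spaces, $k, \alpha \ge 1$, and $\beta \ge \max\{1, \alpha/k\}$ with $\beta > \alpha/k$ strictly. Suppose $S \subseteq M_\beta[N]$ embeds with distortion at most $\alpha$ into a $k$-lacunary metric space. Then there is at most one $x \in M$ such that $|S \cap (\{x\} \times N)| > 1$; consequently $S$ can be partitioned into a set $T$ that isometrically embeds (up to dilation) into $M$ and a set $S \setminus T$ that isometrically embeds into $N$. -/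
/-- let `M, N` be finite metric spaces, `k, α ≥ 1`,
`β ≥ max{1, α/k}` with `β > α/k`, and let `S ⊆ M_β[N]` embed with distortion at most
`α` into a `k`-lacunary metric space.  Then at most one `x ∈ M` has
`|S ∩ ({x} × N)| > 1`; consequently `S` splits into a set `T` that embeds
isometrically (up to dilation) into `M` and a set `S \ T` that embeds isometrically
into `N`. -/
theorem stmt_13 {M N : Type*} [MetricSpace M] [Fintype M] [Nontrivial M] [DecidableEq M]
    [MetricSpace N] [Fintype N] [Nontrivial N]
    (α β k : ℝ) (hα : 1 ≤ α) (hk : 1 ≤ k) (hβ1 : 1 ≤ β) (hβ : α / k < β)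
    (γ : ℝ)
    (hγ : γ = Metric.diam (Set.univ : Set N) /
      sInf {r | ∃ i j : M, i ≠ j ∧ r = dist i j})
    (dL : M × N → M × N → ℝ)
    (hdL : ∀ p q : M × N,
      dL p q = if p.1 = q.1 then dist p.2 q.2 else β * γ * dist p.1 q.1)
    (S : Set (M × N))
    (hemb : ∃ (n : ℕ) (a : ℕ → ℝ) (f : M × N → Fin n), Set.InjOn f S ∧
      IsLacunarySeq k n a ∧ ∃ r : ℝ, 0 < r ∧ ∀ p ∈ S, ∀ q ∈ S,
        r * dL p q ≤ lacunaryDist a (f p) (f q) ∧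
        lacunaryDist a (f p) (f q) ≤ α * (r * dL p q)) :
    (∀ x x' : M, 1 < (S ∩ {p : M × N | p.1 = x}).ncard →
        1 < (S ∩ {p : M × N | p.1 = x'}).ncard → x = x') ∧
    ∃ T : Set (M × N), T ⊆ S ∧
      (∃ f : M × N → M, Set.InjOn f T ∧ ∃ c : ℝ, 0 < c ∧
        ∀ p ∈ T, ∀ q ∈ T, dL p q = c * dist (f p) (f q)) ∧
      (∃ g : M × N → N, Set.InjOn g (S \ T) ∧
        ∀ p ∈ S \ T, ∀ q ∈ S \ T, dL p q = dist (g p) (g q)) := by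
  obtain ⟨n, a, f, hinj, ⟨hpos, hmono, hlac⟩, r, hr, hbound⟩ := hemb
  obtain ⟨u₀, v₀, huv⟩ := exists_pair_ne N
  set D := Metric.diam (Set.univ : Set N) with hDdef
  have hNdiam : ∀ u v : N, dist u v ≤ D := fun u v =>
    Metric.dist_le_diam_of_mem ((Set.toFinite _).isBounded) (Set.mem_univ _) (Set.mem_univ _)
  have hDpos : 0 < D := lt_of_lt_of_le (dist_pos.2 huv) (hNdiam u₀ v₀)
  set SM : Set ℝ := {r | ∃ i j : M, i ≠ j ∧ r = dist i j} with hSMdef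
  have hSMfin : SM.Finite := by
    apply Set.Finite.subset (Set.finite_range (fun p : M × M => dist p.1 p.2))
    rintro s ⟨i, j, _, rfl⟩; exact ⟨(i, j), rfl⟩
  have hSMne : SM.Nonempty := by
    obtain ⟨i, j, hij⟩ := exists_pair_ne M
    exact ⟨dist i j, i, j, hij, rfl⟩
  have hmmem := hSMne.csInf_mem hSMfin
  have hmpos : 0 < sInf SM := by
    obtain ⟨i, j, hij, hval⟩ := hmmem
    rw [hval]; exact dist_pos.2 hij
  have hmle : ∀ x x' : M, x ≠ x' → sInf SM ≤ dist x x' := fun x x' h =>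
    csInf_le hSMfin.bddBelow ⟨x, x', h, rfl⟩
  have hγpos : 0 < γ := by rw [hγ]; exact div_pos hDpos hmpos
  have hγd : ∀ x x' : M, x ≠ x' → D ≤ γ * dist x x' := by
    intro x x' h
    rw [hγ, div_mul_eq_mul_div, le_div_iff₀ hmpos]
    exact mul_le_mul_of_nonneg_left (hmle x x' h) hDpos.le
  have hβpos : 0 < β := lt_of_lt_of_le zero_lt_one hβ1
  have hkpos : 0 < k := lt_of_lt_of_le zero_lt_one hk
  have key : ∀ (x x' : M) (p₁ p₂ q₁ : M × N), x ≠ x' →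
      p₁ ∈ S → p₂ ∈ S → q₁ ∈ S →
      p₁.1 = x → p₂.1 = x → q₁.1 = x' →
      (f p₁).val < (f p₂).val → (f p₁).val < (f q₁).val → False := by
    intro x x' p₁ p₂ q₁ hxx' hp₁ hp₂ hq₁ e₁ e₂ e₃ hv₁ hv₂
    have hne12 : f p₁ ≠ f p₂ := fun h => absurd (congrArg Fin.val h) hv₁.ne
    have hp₂q₁ : p₂ ≠ q₁ := fun h => hxx' (by rw [← e₂, ← e₃, h])
    have hfneq : f p₂ ≠ f q₁ := fun h => hp₂q₁ (hinj hp₂ hq₁ h)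
    set u := (f p₁).val with hu
    have h1 : lacunaryDist a (f p₁) (f p₂) = a u := by
      simp only [lacunaryDist]
      rw [if_neg hne12, min_eq_left hv₁.le]
    have hd12 : dL p₁ p₂ = dist p₁.2 p₂.2 := by
      rw [hdL, if_pos (e₁.trans e₂.symm)]
    have hau : a u ≤ α * (r * D) := by
      have hb := (hbound p₁ hp₁ p₂ hp₂).2
      rw [h1, hd12] at hb
      calc a u ≤ α * (r * dist p₁.2 p₂.2) := hb
        _ ≤ α * (r * D) :=
          mul_le_mul_of_nonneg_left
            (mul_le_mul_of_nonneg_left (hNdiam _ _) hr.le) (by linarith)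
    set m := min (f p₂).val (f q₁).val with hm
    have h2 : lacunaryDist a (f p₂) (f q₁) = a m := by
      simp only [lacunaryDist]
      rw [if_neg hfneq]
    have hmn : m < n := lt_of_le_of_lt (min_le_left _ _) (f p₂).isLt
    have hum : u + 1 ≤ m := by omega
    have ham : a m ≤ a u / k := by
      have h3 : a m ≤ a (u + 1) := hmono (u + 1) m hum hmn
      have h4 : a (u + 1) ≤ a u / k := hlac u (by omega)
      linarith
    have hcross : dL p₂ q₁ = β * γ * dist x x' := by
      rw [hdL, if_neg (by rw [e₂, e₃]; exact hxx'), e₂, e₃]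
    have hlow := (hbound p₂ hp₂ q₁ hq₁).1
    rw [h2, hcross] at hlow
    have hdge : D ≤ γ * dist x x' := hγd x x' hxx'
    have hβk : α < β * k := (div_lt_iff₀ hkpos).1 hβ
    have hstep : r * (β * D) ≤ r * (β * γ * dist x x') := by
      nlinarith [mul_nonneg (mul_nonneg hr.le hβpos.le) (sub_nonneg.2 hdge)]
    have c1 : r * (β * D) ≤ a u / k := le_trans hstep (le_trans hlow ham)
    rw [le_div_iff₀ hkpos] at c1
    linarith [mul_lt_mul_of_pos_right hβk (mul_pos hr hDpos), hau, c1]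
  have hSfin : ∀ x : M, (S ∩ {p : M × N | p.1 = x}).Finite := fun x => Set.toFinite _
  have huniq : ∀ x x' : M, 1 < (S ∩ {p : M × N | p.1 = x}).ncard →
      1 < (S ∩ {p : M × N | p.1 = x'}).ncard → x = x' := by
    intro x x' hx hx'
    by_contra hne
    obtain ⟨p₁, hp₁, p₂, hp₂, hpne⟩ := (Set.one_lt_ncard (hSfin x)).1 hx
    obtain ⟨q₁, hq₁, q₂, hq₂, hqne⟩ := (Set.one_lt_ncard (hSfin x')).1 hx'
    have hpq : ∀ p q : M × N, p ∈ S → q ∈ S → p ≠ q → (f p).val ≠ (f q).val := by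
      intro p q hp hq hne' h
      exact hne' (hinj hp hq (Fin.ext h))
    have hp₁q₁ : p₁ ≠ q₁ := fun h => hne (by rw [← hp₁.2, ← hq₁.2, h])
    have hp₁q₂ : p₁ ≠ q₂ := fun h => hne (by rw [← hp₁.2, ← hq₂.2, h])
    have hp₂q₁ : p₂ ≠ q₁ := fun h => hne (by rw [← hp₂.2, ← hq₁.2, h])
    have hp₂q₂ : p₂ ≠ q₂ := fun h => hne (by rw [← hp₂.2, ← hq₂.2, h])
    have h12 := hpq p₁ p₂ hp₁.1 hp₂.1 hpne
    have h13 := hpq p₁ q₁ hp₁.1 hq₁.1 hp₁q₁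
    have h14 := hpq p₁ q₂ hp₁.1 hq₂.1 hp₁q₂
    have h23 := hpq p₂ q₁ hp₂.1 hq₁.1 hp₂q₁
    have h24 := hpq p₂ q₂ hp₂.1 hq₂.1 hp₂q₂
    have h34 := hpq q₁ q₂ hq₁.1 hq₂.1 hqne
    have hcases : ((f p₁).val < (f p₂).val ∧ (f p₁).val < (f q₁).val) ∨
        ((f p₂).val < (f p₁).val ∧ (f p₂).val < (f q₁).val) ∨
        ((f q₁).val < (f q₂).val ∧ (f q₁).val < (f p₁).val) ∨
        ((f q₂).val < (f q₁).val ∧ (f q₂).val < (f p₁).val) := by omega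
    rcases hcases with ⟨h1, h2⟩ | ⟨h1, h2⟩ | ⟨h1, h2⟩ | ⟨h1, h2⟩
    · exact key x x' p₁ p₂ q₁ hne hp₁.1 hp₂.1 hq₁.1 hp₁.2 hp₂.2 hq₁.2 h1 h2
    · exact key x x' p₂ p₁ q₁ hne hp₂.1 hp₁.1 hq₁.1 hp₂.2 hp₁.2 hq₁.2 h1 h2
    · exact key x' x q₁ q₂ p₁ (Ne.symm hne) hq₁.1 hq₂.1 hp₁.1 hq₁.2 hq₂.2 hp₁.2 h1 h2
    · exact key x' x q₂ q₁ p₁ (Ne.symm hne) hq₂.1 hq₁.1 hp₁.1 hq₂.2 hq₁.2 hp₁.2 h1 h2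
  refine ⟨huniq, ?_⟩
  have hfiber : ∀ p q : M × N, p ∈ S → q ∈ S → p ≠ q → p.1 = q.1 →
      1 < (S ∩ {z : M × N | z.1 = p.1}).ncard := by
    intro p q hp hq hne h1
    rw [Set.one_lt_ncard (hSfin p.1)]
    exact ⟨p, ⟨hp, rfl⟩, q, ⟨hq, h1.symm⟩, hne⟩
  have hcpos : 0 < β * γ := mul_pos hβpos hγpos
  by_cases hex : ∃ x : M, 1 < (S ∩ {p : M × N | p.1 = x}).ncard
  · obtain ⟨x₀, hx₀⟩ := hex
    refine ⟨S ∩ {p : M × N | p.1 ≠ x₀}, Set.inter_subset_left, ?_, ?_⟩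
    · refine ⟨Prod.fst, ?_, β * γ, hcpos, ?_⟩
      · intro p hp q hq h
        by_contra hne
        exact hp.2 (huniq p.1 x₀ (hfiber p q hp.1 hq.1 hne h) hx₀)
      · intro p hp q hq
        by_cases h : p.1 = q.1
        · have hpq : p = q := by
            by_contra hne
            exact hp.2 (huniq p.1 x₀ (hfiber p q hp.1 hq.1 hne h) hx₀)
          subst hpq
          rw [hdL, if_pos rfl]
          simp
        · rw [hdL, if_neg h, mul_assoc]
    · refine ⟨Prod.snd, ?_, ?_⟩
      · intro p hp q hq h
        have hp1 : p.1 = x₀ := by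
          by_contra hc
          exact hp.2 (Set.mem_inter hp.1 hc)
        have hq1 : q.1 = x₀ := by
          by_contra hc
          exact hq.2 (Set.mem_inter hq.1 hc)
        exact Prod.ext (hp1.trans hq1.symm) h
      · intro p hp q hq
        have hp1 : p.1 = x₀ := by
          by_contra hc
          exact hp.2 (Set.mem_inter hp.1 hc)
        have hq1 : q.1 = x₀ := by
          by_contra hc
          exact hq.2 (Set.mem_inter hq.1 hc)
        rw [hdL, if_pos (hp1.trans hq1.symm)]
  · refine ⟨S, subset_rfl, ⟨Prod.fst, ?_, β * γ, hcpos, ?_⟩, Prod.snd, ?_, ?_⟩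
    · intro p hp q hq h
      by_contra hne
      exact hex ⟨p.1, hfiber p q hp hq hne h⟩
    · intro p hp q hq
      by_cases h : p.1 = q.1
      · have hpq : p = q := by
          by_contra hne
          exact hex ⟨p.1, hfiber p q hp hq hne h⟩
        subst hpq
        rw [hdL, if_pos rfl]
        simp
      · rw [hdL, if_neg h, mul_assoc]
    · rw [Set.diff_self]
      exact Set.injOn_empty _
    · intro p hp
      exact (hp.2 hp.1).elim
end

section
/- Let $a_1 \ge a_2 \ge \dots \ge a_n > 0$ be a $k$-lacunary sequence, $k \ge 1$. Then for any four distinct indices $1 \le i_1, i_2, i_3, i_4 \le n$, $\max\{a_{\min\{i_1,i_2\}}, a_{\min\{i_3,i_4\}}\} \ge k \cdot \min\{a_{\min\{i_1,i_3\}}, a_{\min\{i_1,i_4\}}, a_{\min\{i_2,i_3\}}, a_{\min\{i_2,i_4\}}\}$. -/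
/-- if `a 1 ≥ a 2 ≥ … ≥ a n > 0` is `k`-lacunary (`k ≥ 1`), then for
any four distinct indices `i₁, i₂, i₃, i₄` in `{1, …, n}`,
`max{a_{min(i₁,i₂)}, a_{min(i₃,i₄)}} ≥ k · min{a_{min(i₁,i₃)}, a_{min(i₁,i₄)},
a_{min(i₂,i₃)}, a_{min(i₂,i₄)}}`. -/
theorem stmt_14 (n : ℕ) (k : ℝ) (hk : 1 ≤ k) (a : ℕ → ℝ)
    (hpos : ∀ i, 1 ≤ i → i ≤ n → 0 < a i)
    (hmono : ∀ i j, 1 ≤ i → i ≤ j → j ≤ n → a j ≤ a i)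
    (hlac : ∀ i, 1 ≤ i → i + 1 ≤ n → a (i + 1) ≤ a i / k)
    (i₁ i₂ i₃ i₄ : ℕ)
    (h₁ : 1 ≤ i₁ ∧ i₁ ≤ n) (h₂ : 1 ≤ i₂ ∧ i₂ ≤ n)
    (h₃ : 1 ≤ i₃ ∧ i₃ ≤ n) (h₄ : 1 ≤ i₄ ∧ i₄ ≤ n)
    (hne : i₁ ≠ i₂ ∧ i₁ ≠ i₃ ∧ i₁ ≠ i₄ ∧ i₂ ≠ i₃ ∧ i₂ ≠ i₄ ∧ i₃ ≠ i₄) :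
    k * min (min (a (min i₁ i₃)) (a (min i₁ i₄)))
        (min (a (min i₂ i₃)) (a (min i₂ i₄))) ≤
      max (a (min i₁ i₂)) (a (min i₃ i₄)) := by
  obtain ⟨h1a, h1b⟩ := h₁
  obtain ⟨h2a, h2b⟩ := h₂
  obtain ⟨h3a, h3b⟩ := h₃
  obtain ⟨h4a, h4b⟩ := h₄
  have hk0 : (0:ℝ) < k := lt_of_lt_of_le one_pos hk
  have key : ∀ p q, 1 ≤ p → p < q → q ≤ n → k * a q ≤ a p := by
    intro p q hp hpq hqn
    have ha1 : a q ≤ a (p + 1) := hmono (p + 1) q (by omega) (by omega) hqn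
    have ha2 : a (p + 1) ≤ a p / k := hlac p hp (by omega)
    have : a q ≤ a p / k := le_trans ha1 ha2
    calc k * a q ≤ k * (a p / k) := by nlinarith
      _ = a p := by field_simp
  have hcases : (i₁ < i₂ ∧ i₁ < i₃ ∧ i₁ < i₄) ∨ (i₂ < i₁ ∧ i₂ < i₃ ∧ i₂ < i₄) ∨
      (i₃ < i₁ ∧ i₃ < i₂ ∧ i₃ < i₄) ∨ (i₄ < i₁ ∧ i₄ < i₂ ∧ i₄ < i₃) := by omega
  rcases hcases with ⟨hb, hc, hd⟩ | ⟨hb, hc, hd⟩ | ⟨hb, hc, hd⟩ | ⟨hb, hc, hd⟩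
  · calc k * min (min (a (min i₁ i₃)) (a (min i₁ i₄))) (min (a (min i₂ i₃)) (a (min i₂ i₄)))
        ≤ k * a (min i₂ i₃) :=
          mul_le_mul_of_nonneg_left ((min_le_right _ _).trans (min_le_left _ _)) hk0.le
      _ ≤ a i₁ := key i₁ (min i₂ i₃) h1a (lt_min hb hc) (le_trans (min_le_left _ _) h2b)
      _ = a (min i₁ i₂) := by rw [min_eq_left hb.le]
      _ ≤ _ := le_max_left _ _
  · calc k * min (min (a (min i₁ i₃)) (a (min i₁ i₄))) (min (a (min i₂ i₃)) (a (min i₂ i₄)))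
        ≤ k * a (min i₁ i₃) :=
          mul_le_mul_of_nonneg_left ((min_le_left _ _).trans (min_le_left _ _)) hk0.le
      _ ≤ a i₂ := key i₂ (min i₁ i₃) h2a (lt_min hb hc) (le_trans (min_le_left _ _) h1b)
      _ = a (min i₁ i₂) := by rw [min_eq_right hb.le]
      _ ≤ _ := le_max_left _ _
  · calc k * min (min (a (min i₁ i₃)) (a (min i₁ i₄))) (min (a (min i₂ i₃)) (a (min i₂ i₄)))
        ≤ k * a (min i₁ i₄) :=
          mul_le_mul_of_nonneg_left ((min_le_left _ _).trans (min_le_right _ _)) hk0.le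
      _ ≤ a i₃ := key i₃ (min i₁ i₄) h3a (lt_min hb hd) (le_trans (min_le_left _ _) h1b)
      _ = a (min i₃ i₄) := by rw [min_eq_left hd.le]
      _ ≤ _ := le_max_right _ _
  · calc k * min (min (a (min i₁ i₃)) (a (min i₁ i₄))) (min (a (min i₂ i₃)) (a (min i₂ i₄)))
        ≤ k * a (min i₁ i₃) :=
          mul_le_mul_of_nonneg_left ((min_le_left _ _).trans (min_le_left _ _)) hk0.le
      _ ≤ a i₄ := key i₄ (min i₁ i₃) h4a (lt_min hb hd) (le_trans (min_le_left _ _) h1b)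
      _ = a (min i₃ i₄) := by rw [min_eq_right hd.le]
      _ ≤ _ := le_max_right _ _
end

section
/- Let $S$ be a metric space that embeds with distortion at most $\alpha$ into a $k$-lacunary space, $k \ge 1$, $\alpha \ge 1$. Then for any four distinct points $x_1, x_2, x_3, x_4 \in S$: $\max\{d(x_1,x_2), d(x_3,x_4)\} \ge \frac{k}{\alpha}\min\{d(x_1,x_3), d(x_1,x_4), d(x_2,x_3), d(x_2,x_4)\}$. -/
private lemma core_lemma {S : Type*} [MetricSpace S] (k α r : ℝ) (hk : 1 ≤ k) (hα : 1 ≤ α)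
    (hr : 0 < r) {n : ℕ} (a : ℕ → ℝ) (hl : IsLacunarySeq k n a)
    (f : S → Fin n) (hf : Function.Injective f)
    (hb : ∀ x y : S, r * dist x y ≤ lacunaryDist a (f x) (f y) ∧
        lacunaryDist a (f x) (f y) ≤ α * (r * dist x y))
    (u v p : S) (huv : u ≠ v) (hvp : v ≠ p)
    (h1 : (f u).val < (f v).val) (h2 : (f u).val < (f p).val) :
    (k / α) * dist v p ≤ dist u v := by
  have hk0 : (0:ℝ) < k := lt_of_lt_of_le one_pos hk
  have hα0 : (0:ℝ) < α := lt_of_lt_of_le one_pos hα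
  set m := (f u).val with hm
  have hfuv : f u ≠ f v := fun h => huv (hf h)
  have hfvp : f v ≠ f p := fun h => hvp (hf h)
  -- embedded distance of (u,v) is a m
  have e1 : lacunaryDist a (f u) (f v) = a m := by
    unfold lacunaryDist
    rw [if_neg hfuv, min_eq_left (le_of_lt h1)]
  -- embedded distance of (v,p) is small
  have hvn : (f v).val < n := (f v).isLt
  have hpn : (f p).val < n := (f p).isLt
  have hm1v : m + 1 ≤ (f v).val := h1
  have hm1n : m + 1 < n := lt_of_le_of_lt hm1v hvn
  have e2 : lacunaryDist a (f v) (f p) ≤ a m / k := by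
    unfold lacunaryDist
    rw [if_neg hfvp]
    have hle : m + 1 ≤ min (f v).val (f p).val := le_min h1 h2
    have hltn : min (f v).val (f p).val < n := lt_of_le_of_lt (min_le_left _ _) hvn
    calc a (min (f v).val (f p).val) ≤ a (m + 1) := hl.2.1 _ _ hle hltn
      _ ≤ a m / k := hl.2.2 m hm1n
  have b1 := (hb u v).2
  have b2 := (hb v p).1
  rw [e1] at b1
  -- r * dist v p ≤ a m / k ≤ α * (r * dist u v) / k
  have key : k * (r * dist v p) ≤ α * (r * dist u v) := by
    have h3 : r * dist v p ≤ a m / k := le_trans b2 e2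
    have h4 : k * (r * dist v p) ≤ a m := by
      rw [mul_comm]
      exact (le_div_iff₀ hk0).mp h3
    linarith
  have key2 : k * dist v p ≤ α * dist u v := by
    have := le_of_mul_le_mul_left (by nlinarith : r * (k * dist v p) ≤ r * (α * dist u v)) hr
    exact this
  rw [div_mul_eq_mul_div, div_le_iff₀ hα0]
  linarith

/-- if a metric space `S` embeds with distortion at most `α` into a
`k`-lacunary space (`k, α ≥ 1`), then for any four distinct points `x₁, x₂, x₃, x₄`,
`max{d(x₁,x₂), d(x₃,x₄)} ≥ (k/α)·min{d(x₁,x₃), d(x₁,x₄), d(x₂,x₃), d(x₂,x₄)}`. -/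
theorem stmt_15 {S : Type*} [MetricSpace S] (k α : ℝ) (hk : 1 ≤ k) (hα : 1 ≤ α)
    (hemb : ∃ (n : ℕ) (a : ℕ → ℝ) (f : S → Fin n), Function.Injective f ∧
      IsLacunarySeq k n a ∧ ∃ r : ℝ, 0 < r ∧ ∀ x y : S,
        r * dist x y ≤ lacunaryDist a (f x) (f y) ∧
        lacunaryDist a (f x) (f y) ≤ α * (r * dist x y))
    (x₁ x₂ x₃ x₄ : S)
    (hne : x₁ ≠ x₂ ∧ x₁ ≠ x₃ ∧ x₁ ≠ x₄ ∧ x₂ ≠ x₃ ∧ x₂ ≠ x₄ ∧ x₃ ≠ x₄) :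
    (k / α) * min (min (dist x₁ x₃) (dist x₁ x₄)) (min (dist x₂ x₃) (dist x₂ x₄)) ≤
      max (dist x₁ x₂) (dist x₃ x₄) := by
  obtain ⟨n, a, f, hf, hl, r, hr, hb⟩ := hemb
  obtain ⟨h12, h13, h14, h23, h24, h34⟩ := hne
  have hkα : (0:ℝ) ≤ k / α := div_nonneg (by linarith) (by linarith)
  set D := min (min (dist x₁ x₃) (dist x₁ x₄)) (min (dist x₂ x₃) (dist x₂ x₄)) with hD
  have hD13 : D ≤ dist x₁ x₃ := le_trans (min_le_left _ _) (min_le_left _ _)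
  have hD14 : D ≤ dist x₁ x₄ := le_trans (min_le_left _ _) (min_le_right _ _)
  have hD23 : D ≤ dist x₂ x₃ := le_trans (min_le_right _ _) (min_le_left _ _)
  have hD24 : D ≤ dist x₂ x₄ := le_trans (min_le_right _ _) (min_le_right _ _)
  have ne12 : (f x₁).val ≠ (f x₂).val := fun h => h12 (hf (Fin.val_injective h))
  have ne13 : (f x₁).val ≠ (f x₃).val := fun h => h13 (hf (Fin.val_injective h))
  have ne14 : (f x₁).val ≠ (f x₄).val := fun h => h14 (hf (Fin.val_injective h))
  have ne23 : (f x₂).val ≠ (f x₃).val := fun h => h23 (hf (Fin.val_injective h))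
  have ne24 : (f x₂).val ≠ (f x₄).val := fun h => h24 (hf (Fin.val_injective h))
  have ne34 : (f x₃).val ≠ (f x₄).val := fun h => h34 (hf (Fin.val_injective h))
  by_cases c1 : (f x₁).val < (f x₂).val ∧ (f x₁).val < (f x₃).val ∧ (f x₁).val < (f x₄).val
  · -- cross pair (x₂, x₃), side pair (x₁, x₂)
    have := core_lemma k α r hk hα hr a hl f hf hb x₁ x₂ x₃ h12 h23 c1.1 c1.2.1
    calc (k/α) * D ≤ (k/α) * dist x₂ x₃ := mul_le_mul_of_nonneg_left hD23 hkα
      _ ≤ dist x₁ x₂ := this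
      _ ≤ _ := le_max_left _ _
  by_cases c2 : (f x₂).val < (f x₁).val ∧ (f x₂).val < (f x₃).val ∧ (f x₂).val < (f x₄).val
  · have := core_lemma k α r hk hα hr a hl f hf hb x₂ x₁ x₃ h12.symm h13 c2.1 c2.2.1
    calc (k/α) * D ≤ (k/α) * dist x₁ x₃ := mul_le_mul_of_nonneg_left hD13 hkα
      _ ≤ dist x₂ x₁ := this
      _ = dist x₁ x₂ := dist_comm _ _
      _ ≤ _ := le_max_left _ _
  by_cases c3 : (f x₃).val < (f x₁).val ∧ (f x₃).val < (f x₂).val ∧ (f x₃).val < (f x₄).val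
  · have := core_lemma k α r hk hα hr a hl f hf hb x₃ x₄ x₁ h34 (Ne.symm h14) c3.2.2 c3.1
    calc (k/α) * D ≤ (k/α) * dist x₁ x₄ := mul_le_mul_of_nonneg_left hD14 hkα
      _ = (k/α) * dist x₄ x₁ := by rw [dist_comm]
      _ ≤ dist x₃ x₄ := this
      _ ≤ _ := le_max_right _ _
  · have c4 : (f x₄).val < (f x₁).val ∧ (f x₄).val < (f x₂).val ∧ (f x₄).val < (f x₃).val := by
      omega
    have := core_lemma k α r hk hα hr a hl f hf hb x₄ x₃ x₁ (Ne.symm h34) (Ne.symm h13) c4.2.2 c4.1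
    calc (k/α) * D ≤ (k/α) * dist x₁ x₃ := mul_le_mul_of_nonneg_left hD13 hkα
      _ = (k/α) * dist x₃ x₁ := by rw [dist_comm]
      _ ≤ dist x₄ x₃ := this
      _ = dist x₃ x₄ := dist_comm _ _
      _ ≤ _ := le_max_right _ _
end

section
/- Let $\alpha > 2$ and let $M$ be a finite metric space with diameter $\Delta > 0$ and diametrical pair $x, \bar{x}$. Suppose $x = x_1, \dots, x_s$ is a maximal subset of $M$ containing $x$ with all pairwise distances at least $\Delta/\alpha$, and let $A_i = B(x_i, \Delta/\alpha) \setminus \bigcup_{j<i} B(x_j, \Delta/\alpha)$. Then the $A_i$ partition $M$, each $A_i$ has diameter at most $2\Delta/\alpha$, and for each $i$ there exists $y \in M$ with $d(y, z) \ge \Delta/\alpha$ for all $z \in A_i$. -/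
/-- let `α > 2`, `M` a finite metric space with diameter `Δ > 0` and
diametrical pair `x, x̄`.  Let `x = x₁, …, x_s` be a maximal subset containing `x`
with pairwise distances at least `Δ/α`, and
`Aᵢ = B(xᵢ, Δ/α) \ ⋃_{j<i} B(xⱼ, Δ/α)`.  Then the `Aᵢ` partition `M`, each has
diameter at most `2Δ/α`, and for each `i` some `y ∈ M` has `d(y, z) ≥ Δ/α` for all
`z ∈ Aᵢ`. -/
theorem stmt_17 {M : Type*} [MetricSpace M] [Fintype M] (α : ℝ) (hα : 2 < α)
    (Δ : ℝ) (hΔ : Δ = Metric.diam (Set.univ : Set M)) (hΔpos : 0 < Δ)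
    (x xbar : M) (hdiam : dist x xbar = Δ)
    (s : ℕ) (hs : 1 ≤ s) (xs : ℕ → M) (hx1 : xs 1 = x)
    (hsep : ∀ i j, 1 ≤ i → i < j → j ≤ s → Δ / α ≤ dist (xs i) (xs j))
    (hmax : ∀ y : M, ∃ i, 1 ≤ i ∧ i ≤ s ∧ dist y (xs i) < Δ / α)
    (A : ℕ → Set M)
    (hA : ∀ i, A i = Metric.ball (xs i) (Δ / α) \
      ⋃ j ∈ Finset.Ico 1 i, Metric.ball (xs j) (Δ / α)) :
    (⋃ i ∈ Finset.Icc 1 s, A i) = Set.univ ∧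
    (∀ i j, 1 ≤ i → i < j → j ≤ s → Disjoint (A i) (A j)) ∧
    (∀ i, 1 ≤ i → i ≤ s → Metric.diam (A i) ≤ 2 * Δ / α) ∧
    (∀ i, 1 ≤ i → i ≤ s → ∃ y : M, ∀ z ∈ A i, Δ / α ≤ dist y z) := by
  classical
  have hαpos : 0 < α := by linarith
  have hrpos : 0 < Δ / α := div_pos hΔpos hαpos
  have hkey : Δ / α * α = Δ := div_mul_cancel₀ _ (ne_of_gt hαpos)
  refine ⟨?_, ?_, ?_, ?_⟩
  · ext y
    simp only [Set.mem_iUnion, Set.mem_univ, iff_true, Finset.mem_Icc]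
    have hex := hmax y
    obtain ⟨h1, h2, h3⟩ := Nat.find_spec hex
    refine ⟨Nat.find hex, ⟨h1, h2⟩, ?_⟩
    rw [hA]
    refine ⟨Metric.mem_ball.2 h3, ?_⟩
    simp only [Set.mem_iUnion, Finset.mem_Ico, not_exists]
    rintro j ⟨hj1, hj2⟩ hmem
    exact Nat.find_min hex hj2 ⟨hj1, le_of_lt (lt_of_lt_of_le hj2 h2),
      Metric.mem_ball.1 hmem⟩
  · intro i j hi hij hjs
    rw [Set.disjoint_left]
    intro z hzi hzj
    rw [hA] at hzi hzj
    apply hzj.2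
    simp only [Set.mem_iUnion, Finset.mem_Ico]
    exact ⟨i, ⟨hi, hij⟩, hzi.1⟩
  · intro i h1 h2
    have hsub : A i ⊆ Metric.ball (xs i) (Δ / α) := by
      rw [hA]; exact Set.diff_subset
    calc Metric.diam (A i) ≤ Metric.diam (Metric.ball (xs i) (Δ / α)) :=
          Metric.diam_mono hsub (Metric.isBounded_ball)
      _ ≤ 2 * (Δ / α) := Metric.diam_ball (le_of_lt hrpos)
      _ = 2 * Δ / α := by ring
  · intro i h1 h2
    rcases eq_or_lt_of_le h1 with h | h
    · refine ⟨xbar, fun z hz => ?_⟩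
      rw [hA] at hz
      have hz1 : dist z x < Δ / α := by
        have := Metric.mem_ball.1 hz.1
        rwa [← h, hx1] at this
      have htri : Δ ≤ dist x z + dist z xbar := hdiam ▸ dist_triangle x z xbar
      have hc : dist x z = dist z x := dist_comm x z
      have hc2 : dist xbar z = dist z xbar := dist_comm xbar z
      nlinarith [hkey]
    · refine ⟨x, fun z hz => ?_⟩
      rw [hA] at hz
      have h1i : (1 : ℕ) ∈ Finset.Ico 1 i := Finset.mem_Ico.2 ⟨le_refl 1, h⟩
      have : z ∉ Metric.ball (xs 1) (Δ / α) := by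
        intro hmem
        exact hz.2 (Set.mem_iUnion.2 ⟨1, Set.mem_iUnion.2 ⟨h1i, hmem⟩⟩)
      rw [hx1, Metric.mem_ball, not_lt, dist_comm] at this
      exact this
end
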